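/- arXiv:2503.10039 — 5 statements merged into one kernel-verified Lean document; each statement's English description precedes it below -/
import Mathlib

section
/- Let β be the tribonacci number (unique root of x^3 = x^2 + x + 1 in (1,2)). Then S_β(3) = [(001)^∞]_β: the sequence (001)^∞ satisfies (001)^∞ ⪯ σ^n((001)^∞) ≺ (110)^∞ for all n, and no periodic binary sequence of smallest period 3 has all shifts strictly between (001)^∞ and (110)^∞. -/
open Function Filter

noncomputable section

/-- Left shift on sequences. -/
def shift (x : ℕ → ℕ) : ℕ → ℕ := fun i => x (i + 1)

/-- Strict lexicographic order on digit sequences. -/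
def seqLt (x y : ℕ → ℕ) : Prop := ∃ n, (∀ i < n, x i = y i) ∧ x n < y n

/-- Non-strict lexicographic order. -/
def seqLe (x y : ℕ → ℕ) : Prop := seqLt x y ∨ x = y

/-- The periodic sequence obtained by repeating the word `w`. -/
def wordSeq (w : List ℕ) : ℕ → ℕ := fun i => w.getD (i % w.length) 0

/-- The β-transformation x ↦ βx mod 1 on [0,1). -/
def Tmap (β : ℝ) : ℝ → ℝ := fun x => Int.fract (β * x)

/-- Survivor set of the open dynamical system with hole [0, t). -/
def K (β t : ℝ) : Set ℝ := {x | x ∈ Set.Ico (0:ℝ) 1 ∧ ∀ n : ℕ, t ≤ (Tmap β)^[n] x}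

/-- The critical value `S_β(p)`. -/
def S (β : ℝ) (p : ℕ) : ℝ :=
  sSup {t | t ∈ Set.Ico (0:ℝ) 1 ∧ ∃ x ∈ K β t, Function.minimalPeriod (Tmap β) x = p}

/-- Value of a digit sequence in base β. -/
def val (β : ℝ) (x : ℕ → ℕ) : ℝ := ∑' i, (x i : ℝ) / β ^ (i + 1)

lemma shift_iter (x : ℕ → ℕ) (n i : ℕ) : shift^[n] x i = x (i + n) := by
  induction n generalizing i with
  | zero => rfl
  | succ n ih =>
    rw [Function.iterate_succ_apply']
    show shift^[n] x (i + 1) = _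
    rw [ih]
    show x (i + 1 + n) = x (i + (n + 1))
    congr 1
    omega

lemma seqLt_irrefl (x : ℕ → ℕ) : ¬ seqLt x x := by
  rintro ⟨n, -, h⟩; exact lt_irrefl _ h

lemma mod3eq (x : ℕ → ℕ) (h : ∀ i, x (i + 3) = x i) : ∀ i, x i = x (i % 3) := by
  intro i
  induction i using Nat.strong_induction_on with
  | _ i ih =>
    rcases lt_or_ge i 3 with h3 | h3
    · rw [Nat.mod_eq_of_lt h3]
    · obtain ⟨j, rfl⟩ : ∃ j, i = j + 3 := ⟨i - 3, by omega⟩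
      rw [h j, ih j (by omega)]
      congr 1
      omega

lemma seq_eq_word (x : ℕ → ℕ) (h : ∀ i, x i = x (i % 3)) (n : ℕ) :
    shift^[n] x = fun i => x ((i + n) % 3) := by
  funext i; rw [shift_iter, h (i + n)]

lemma word001_mod (i : ℕ) : wordSeq [0,0,1] i = wordSeq [0,0,1] (i % 3) := by
  show [0,0,1].getD (i % 3) 0 = [0,0,1].getD (i % 3 % 3) 0
  rw [Nat.mod_mod_of_dvd _ (dvd_refl 3)]


lemma eq_word3 (x : ℕ → ℕ) (hmod : ∀ i, x i = x (i % 3)) (a b c : ℕ)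
    (h0 : x 0 = a) (h1 : x 1 = b) (h2 : x 2 = c) : x = wordSeq [a,b,c] := by
  funext i
  rw [hmod i]
  have : i % 3 = 0 ∨ i % 3 = 1 ∨ i % 3 = 2 := by omega
  rcases this with h | h | h <;> simp [h, wordSeq, h0, h1, h2]

lemma a0 : wordSeq [0,0,1] 0 = 0 := rfl
lemma a1 : wordSeq [0,0,1] 1 = 0 := rfl
lemma a2 : wordSeq [0,0,1] 2 = 1 := rfl
lemma b0 : wordSeq [1,1,0] 0 = 1 := rfl
lemma b1 : wordSeq [1,1,0] 1 = 1 := rfl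

lemma part2 (n : ℕ) : seqLe (wordSeq [0,0,1]) (shift^[n] (wordSeq [0,0,1])) ∧
    seqLt (shift^[n] (wordSeq [0,0,1])) (wordSeq [1,1,0]) := by
  have hs : ∀ i, shift^[n] (wordSeq [0,0,1]) i = wordSeq [0,0,1] ((i + n) % 3) := by
    intro i; rw [shift_iter]; exact word001_mod (i + n)
  have h3 : n % 3 = 0 ∨ n % 3 = 1 ∨ n % 3 = 2 := by omega
  rcases h3 with h | h | h
  · constructor
    · right
      funext i
      rw [hs i, word001_mod i]
      congr 1
      omega
    · exact ⟨0, by omega, by rw [hs 0, show (0 + n) % 3 = 0 by omega]; decide⟩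
  · constructor
    · left
      refine ⟨1, ?_, ?_⟩
      · intro i hi
        have : i = 0 := by omega
        subst this
        rw [hs 0, show (0 + n) % 3 = 1 by omega]
        decide
      · rw [hs 1, show (1 + n) % 3 = 2 by omega]; decide
    · exact ⟨0, by omega, by rw [hs 0, show (0 + n) % 3 = 1 by omega]; decide⟩
  · constructor
    · left
      exact ⟨0, by omega, by rw [hs 0, show (0 + n) % 3 = 2 by omega]; decide⟩
    · refine ⟨1, ?_, ?_⟩
      · intro i hi
        have : i = 0 := by omega
        subst this
        rw [hs 0, show (0 + n) % 3 = 2 by omega]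
        decide
      · rw [hs 1, show (1 + n) % 3 = 0 by omega]; decide

lemma part3 (x : ℕ → ℕ) (hdig : ∀ i, x i ≤ 1)
    (hper : Function.minimalPeriod shift x = 3) :
    ¬ (∀ n : ℕ, seqLt (wordSeq [0,0,1]) (shift^[n] x) ∧
        seqLt (shift^[n] x) (wordSeq [1,1,0])) := by
  intro hall
  have h3 : Function.IsPeriodicPt shift 3 x := by
    rw [← hper]; exact Function.isPeriodicPt_minimalPeriod shift x
  have hxp : ∀ i, x (i + 3) = x i := by
    intro i
    have := congrFun h3 i
    rwa [shift_iter] at this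
  have hmod := mod3eq x hxp
  have hsmod : ∀ n, ∀ i, shift^[n] x i = x ((i + n) % 3) := by
    intro n i; rw [shift_iter]; exact hmod (i + n)
  -- values at specific indices via periodicity
  have hx3 : x 3 = x 0 := hxp 0
  have hx4 : x 4 = x 1 := hxp 1
  -- helper to produce word equality
  have hword : ∀ n : ℕ, shift^[n] x = wordSeq [x ((0+n)%3), x ((1+n)%3), x ((2+n)%3)] := by
    intro n
    apply eq_word3
    · intro i
      rw [hsmod n i, hsmod n (i % 3)]
      congr 1
      omega
    · exact hsmod n 0
    · exact hsmod n 1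
    · exact hsmod n 2
  have hc0 : x 0 = 0 ∨ x 0 = 1 := by have := hdig 0; omega
  have hc1 : x 1 = 0 ∨ x 1 = 1 := by have := hdig 1; omega
  have hc2 : x 2 = 0 ∨ x 2 = 1 := by have := hdig 2; omega
  -- constant case is impossible
  have hconst : ¬ (x 1 = x 0 ∧ x 2 = x 0) := by
    rintro ⟨e1, e2⟩
    have hx : ∀ j, x j = x 0 := by
      intro j
      rw [hmod j]
      have : j % 3 = 0 ∨ j % 3 = 1 ∨ j % 3 = 2 := by omega
      rcases this with h | h | h <;> rw [h] <;> simp [e1, e2]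
    have h1 : Function.IsPeriodicPt shift 1 x := by
      show shift^[1] x = x
      funext i
      rw [shift_iter]
      rw [hx (i + 1), hx i]
    have := h1.minimalPeriod_dvd
    rw [hper] at this
    omega
  rcases hc0 with h0 | h0 <;> rcases hc1 with h1 | h1 <;> rcases hc2 with h2 | h2
  · exact hconst ⟨by omega, by omega⟩
  · -- (0,0,1) : shift^[0] x = a
    have := hword 0
    simp only [show (0+0)%3 = 0 by omega, show (1+0)%3 = 1 by omega,
      show (2+0)%3 = 2 by omega, h0, h1, h2] at this
    have hcon := (hall 0).1
    rw [this] at hcon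
    exact seqLt_irrefl _ hcon
  · -- (0,1,0) : shift^[2] x = a
    have := hword 2
    simp only [show (0+2)%3 = 2 by omega, show (1+2)%3 = 0 by omega,
      show (2+2)%3 = 1 by omega, h0, h1, h2] at this
    have hcon := (hall 2).1
    rw [this] at hcon
    exact seqLt_irrefl _ hcon
  · -- (0,1,1) : shift^[1] x = b
    have := hword 1
    simp only [show (0+1)%3 = 1 by omega, show (1+1)%3 = 2 by omega,
      show (2+1)%3 = 0 by omega, h0, h1, h2] at this
    have hcon := (hall 1).2
    rw [this] at hcon
    exact seqLt_irrefl _ hcon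
  · -- (1,0,0) : shift^[1] x = a
    have := hword 1
    simp only [show (0+1)%3 = 1 by omega, show (1+1)%3 = 2 by omega,
      show (2+1)%3 = 0 by omega, h0, h1, h2] at this
    have hcon := (hall 1).1
    rw [this] at hcon
    exact seqLt_irrefl _ hcon
  · -- (1,0,1) : shift^[2] x = b
    have := hword 2
    simp only [show (0+2)%3 = 2 by omega, show (1+2)%3 = 0 by omega,
      show (2+2)%3 = 1 by omega, h0, h1, h2] at this
    have hcon := (hall 2).2
    rw [this] at hcon
    exact seqLt_irrefl _ hcon
  · -- (1,1,0) : shift^[0] x = b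
    have := hword 0
    simp only [show (0+0)%3 = 0 by omega, show (1+0)%3 = 1 by omega,
      show (2+0)%3 = 2 by omega, h0, h1, h2] at this
    have hcon := (hall 0).2
    rw [this] at hcon
    exact seqLt_irrefl _ hcon
  · exact hconst ⟨by omega, by omega⟩

lemma val001 (β : ℝ) (hβ2 : 1 < β) : val β (wordSeq [0,0,1]) = 1 / (β ^ 3 - 1) := by
  have hβ0 : 0 < β := by linarith
  have hb3 : (1:ℝ) < β ^ 3 := one_lt_pow₀ hβ2 (by norm_num)
  have hb3' : (0:ℝ) < β ^ 3 := by linarith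
  unfold val
  have hinj : Function.Injective (fun k : ℕ => 3 * k + 2) := by
    intro a b h; simp only at h; omega
  have hsupp : Function.support (fun i : ℕ => ((wordSeq [0,0,1] i : ℝ)) / β ^ (i + 1)) ⊆
      Set.range (fun k : ℕ => 3 * k + 2) := by
    intro i hi
    simp only [Function.mem_support] at hi
    by_contra hr
    apply hi
    have : i % 3 ≠ 2 := by
      intro h
      exact hr ⟨i / 3, by simp only []; omega⟩
    have : wordSeq [0,0,1] i = 0 := by
      unfold wordSeq
      have h3 : i % 3 = 0 ∨ i % 3 = 1 := by omega
      rcases h3 with h | h <;> simp [h]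
    rw [this]
    simp
  have := hinj.tsum_eq (f := fun i : ℕ => ((wordSeq [0,0,1] i : ℝ)) / β ^ (i + 1)) hsupp
  rw [← this]
  have heq : ∀ k : ℕ, ((wordSeq [0,0,1] (3 * k + 2) : ℝ)) / β ^ (3 * k + 2 + 1)
      = (β ^ 3)⁻¹ * ((β ^ 3)⁻¹) ^ k := by
    intro k
    have hw : wordSeq [0,0,1] (3 * k + 2) = 1 := by
      unfold wordSeq
      have : (3 * k + 2) % 3 = 2 := by omega
      simp [this]
    rw [hw]
    rw [show 3 * k + 2 + 1 = 3 * (k + 1) by omega, pow_mul]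
    push_cast
    rw [one_div, ← inv_pow]
    rw [pow_succ']
  simp only [heq]
  rw [tsum_mul_left, tsum_geometric_of_lt_one (by positivity)
    (by rw [inv_lt_one_iff₀]; right; exact hb3)]
  rw [one_div]
  rw [← mul_inv]
  congr 1
  field_simp

lemma Tmap_lo {β x : ℝ} (h0 : 0 ≤ β * x) (h1 : β * x < 1) : Tmap β x = β * x :=
  Int.fract_eq_self.2 ⟨h0, h1⟩

lemma Tmap_hi {β x : ℝ} (h0 : 1 ≤ β * x) (h1 : β * x < 2) : Tmap β x = β * x - 1 := by
  have h2 : Int.fract (β * x) = Int.fract (β * x - 1) := by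
    conv_lhs => rw [show β * x = (β * x - 1) + 1 by ring]
    rw [Int.fract_add_one]
  unfold Tmap
  rw [h2]
  exact Int.fract_eq_self.2 ⟨by linarith, by linarith⟩

lemma Tmap_sub_floor (β x : ℝ) : Tmap β x = β * x - ⌊β * x⌋ := by
  unfold Tmap
  exact (Int.self_sub_floor (β * x)).symm

set_option maxHeartbeats 2000000 in
lemma part1 (β : ℝ) (hβ1 : β ^ 3 = β ^ 2 + β + 1) (hβ2 : 1 < β) (hβ3 : β < 2) :
    S β 3 = 1 / (β ^ 3 - 1) := by
  have hβ0 : (0:ℝ) < β := by linarith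
  have hD : (0:ℝ) < β ^ 2 + β := by nlinarith
  have hD1 : (1:ℝ) < β ^ 2 + β := by nlinarith
  have hc : β ^ 3 - 1 = β ^ 2 + β := by linarith
  have h3pos : (0:ℝ) < β ^ 3 - 1 := by rw [hc]; exact hD
  set v : ℝ := 1 / (β ^ 3 - 1) with hvdef
  set u : ℝ := β / (β ^ 2 + β) with hudef
  set w : ℝ := β ^ 2 / (β ^ 2 + β) with hwdef
  have hv : v = 1 / (β ^ 2 + β) := by rw [hvdef, hc]
  have hTv : Tmap β v = u := by
    have hm : β * v = u := by rw [hv, hudef]; field_simp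
    rw [Tmap_lo (by rw [hm, hudef]; positivity)
      (by rw [hm, hudef, div_lt_one hD]; nlinarith), hm]
  have hTu : Tmap β u = w := by
    have hm : β * u = w := by rw [hudef, hwdef]; field_simp
    rw [Tmap_lo (by rw [hm, hwdef]; positivity)
      (by rw [hm, hwdef, div_lt_one hD]; nlinarith), hm]
  have hTw : Tmap β w = v := by
    have hm : β * w = β ^ 3 / (β ^ 2 + β) := by rw [hwdef]; field_simp
    rw [Tmap_hi (by rw [hm, le_div_iff₀ hD]; nlinarith)
      (by rw [hm, div_lt_iff₀ hD]; nlinarith), hm, hv]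
    field_simp
    linarith
  have hT3v : (Tmap β)^[3] v = v := by
    rw [show (3:ℕ) = 2 + 1 from rfl, Function.iterate_succ_apply,
      show (2:ℕ) = 1 + 1 from rfl, Function.iterate_succ_apply, Function.iterate_one,
      hTv, hTu, hTw]
  have horbit : ∀ n : ℕ, (Tmap β)^[n] v = v ∨ (Tmap β)^[n] v = u ∨ (Tmap β)^[n] v = w := by
    intro n
    induction n with
    | zero => left; rfl
    | succ n ih =>
      rw [Function.iterate_succ_apply']
      rcases ih with h | h | h <;> rw [h]
      · right; left; exact hTv
      · right; right; exact hTu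
      · left; exact hTw
  have hvu : v ≤ u := by
    rw [hv, hudef, div_le_div_iff₀ hD hD]
    nlinarith
  have hvw : v ≤ w := by
    rw [hv, hwdef, div_le_div_iff₀ hD hD]
    nlinarith
  have hvmem : v ∈ Set.Ico (0:ℝ) 1 := by
    constructor
    · rw [hv]; positivity
    · rw [hv, div_lt_one hD]; exact hD1
  have hvK : v ∈ K β v := by
    refine ⟨hvmem, fun n => ?_⟩
    rcases horbit n with h | h | h
    · rw [h]
    · rw [h]; exact hvu
    · rw [h]; exact hvw
  have hvne : Tmap β v ≠ v := by
    rw [hTv, hudef, hv]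
    intro h
    rw [div_eq_div_iff hD.ne' hD.ne'] at h
    nlinarith
  have hmin : Function.minimalPeriod (Tmap β) v = 3 := by
    have hp : Function.IsPeriodicPt (Tmap β) 3 v := hT3v
    have hdvd := hp.minimalPeriod_dvd
    rcases (Nat.dvd_prime Nat.prime_three).1 hdvd with h | h
    · exfalso
      have h2 := Function.isPeriodicPt_minimalPeriod (Tmap β) v
      rw [h] at h2
      exact hvne h2
    · exact h
  have hub : ∀ t ∈ {t | t ∈ Set.Ico (0:ℝ) 1 ∧
      ∃ x ∈ K β t, Function.minimalPeriod (Tmap β) x = 3}, t ≤ v := by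
    rintro t ⟨htI, x, ⟨⟨hx0, hx1⟩, hsur⟩, hxper⟩
    set x1 : ℝ := Tmap β x with hx1def
    set x2 : ℝ := Tmap β x1 with hx2def
    have h1nn : 0 ≤ x1 := Int.fract_nonneg _
    have h1lt : x1 < 1 := Int.fract_lt_one _
    have h2nn : 0 ≤ x2 := Int.fract_nonneg _
    have h2lt : x2 < 1 := Int.fract_lt_one _
    have it2 : (Tmap β)^[2] x = x2 := by
      rw [show (2:ℕ) = 1 + 1 from rfl, Function.iterate_succ_apply, Function.iterate_one,
        hx2def, hx1def]
    have hT3x : Tmap β x2 = x := by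
      have hp := Function.isPeriodicPt_minimalPeriod (Tmap β) x
      rw [hxper] at hp
      have h32 : (Tmap β)^[3] x = Tmap β x2 := by
        rw [show (3:ℕ) = 2 + 1 from rfl, Function.iterate_succ_apply', it2]
      rw [← h32]; exact hp
    have hd0l : (0:ℤ) ≤ ⌊β * x⌋ := Int.floor_nonneg.2 (mul_nonneg hβ0.le hx0)
    have hd0u : ⌊β * x⌋ ≤ 1 := by
      have hlt : ⌊β * x⌋ < 2 :=
        Int.floor_lt.2 (by push_cast; linarith [mul_le_of_le_one_right hβ0.le hx1.le])
      omega
    have hd1l : (0:ℤ) ≤ ⌊β * x1⌋ := Int.floor_nonneg.2 (mul_nonneg hβ0.le h1nn)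
    have hd1u : ⌊β * x1⌋ ≤ 1 := by
      have hlt : ⌊β * x1⌋ < 2 :=
        Int.floor_lt.2 (by push_cast; linarith [mul_le_of_le_one_right hβ0.le h1lt.le])
      omega
    have hd2l : (0:ℤ) ≤ ⌊β * x2⌋ := Int.floor_nonneg.2 (mul_nonneg hβ0.le h2nn)
    have hd2u : ⌊β * x2⌋ ≤ 1 := by
      have hlt : ⌊β * x2⌋ < 2 :=
        Int.floor_lt.2 (by push_cast; linarith [mul_le_of_le_one_right hβ0.le h2lt.le])
      omega
    set d0 : ℤ := ⌊β * x⌋ with hd0def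
    set d1 : ℤ := ⌊β * x1⌋ with hd1def
    set d2 : ℤ := ⌊β * x2⌋ with hd2def
    have e1 : x1 = β * x - d0 := by rw [hx1def, Tmap_sub_floor, hd0def]
    have e2 : x2 = β * x1 - d1 := by rw [hx2def, Tmap_sub_floor, hd1def]
    have e3 : x = β * x2 - d2 := by rw [← hT3x, Tmap_sub_floor, hd2def]
    have hs0 : t ≤ x := by
      have := hsur 0
      rwa [Function.iterate_zero_apply] at this
    have hs1 : t ≤ x1 := by
      have := hsur 1
      rwa [Function.iterate_one] at this
    have hs2 : t ≤ x2 := by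
      have := hsur 2
      rwa [it2] at this
    have hkey : x * (β ^ 3 - 1) = β ^ 2 * d0 + β * d1 + d2 := by
      linear_combination (-1 : ℝ) * e3 - β * e2 - β ^ 2 * e1
    have hkey1 : x1 * (β ^ 3 - 1) = β ^ 2 * d1 + β * d2 + d0 := by
      linear_combination β * hkey + (β ^ 3 - 1) * e1
    have hkey2 : x2 * (β ^ 3 - 1) = β ^ 2 * d2 + β * d0 + d1 := by
      linear_combination β * hkey1 + (β ^ 3 - 1) * e2
    have hvgoal : ∀ y : ℝ, t ≤ y → y * (β ^ 3 - 1) = 1 → t ≤ v := by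
      intro y hty hy
      rw [hvdef, le_div_iff₀ h3pos]
      nlinarith
    clear_value d0 d1 d2
    interval_cases d0 <;> interval_cases d1 <;> interval_cases d2 <;>
      push_cast at hkey hkey1 hkey2 e1 e2 e3 <;> norm_num at hkey hkey1 hkey2 e1 e2 e3
    · exfalso
      have hx : x = 0 := by
        rcases hkey with h | h
        · exact h
        · linarith
      have hfix : Tmap β x = x := by
        rw [← hx1def, e1, hx, mul_zero]
      have hip : Function.IsPeriodicPt (Tmap β) 1 x := by
        rw [Function.IsPeriodicPt, Function.IsFixedPt, Function.iterate_one]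
        exact hfix
      have hdd := hip.minimalPeriod_dvd
      rw [hxper] at hdd
      omega
    · exact hvgoal x hs0 hkey
    · exact hvgoal x2 hs2 (by linarith [hkey2])
    · exfalso
      have h1 : x1 * (β ^ 3 - 1) = β ^ 2 + β := by linarith [hkey1]
      nlinarith [mul_pos (show (0:ℝ) < 1 - x1 by linarith) h3pos]
    · exact hvgoal x1 hs1 (by linarith [hkey1])
    · exfalso
      have h1 : x2 * (β ^ 3 - 1) = β ^ 2 + β := by linarith [hkey2]
      nlinarith [mul_pos (show (0:ℝ) < 1 - x2 by linarith) h3pos]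
    · exfalso
      have h1 : x * (β ^ 3 - 1) = β ^ 2 + β := by linarith [hkey]
      nlinarith [mul_pos (show (0:ℝ) < 1 - x by linarith) h3pos]
    · exfalso
      have h1 : x * (β ^ 3 - 1) = β ^ 2 + β + 1 := by linarith [hkey]
      nlinarith [mul_pos (show (0:ℝ) < 1 - x by linarith) h3pos]
  have hvA : v ∈ {t | t ∈ Set.Ico (0:ℝ) 1 ∧
      ∃ x ∈ K β t, Function.minimalPeriod (Tmap β) x = 3} := ⟨hvmem, v, hvK, hmin⟩
  unfold S
  exact le_antisymm (csSup_le ⟨v, hvA⟩ hub) (le_csSup ⟨v, fun t ht => hub t ht⟩ hvA)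

theorem stmt11 (β : ℝ) (hβ1 : β ^ 3 = β ^ 2 + β + 1) (hβ2 : 1 < β) (hβ3 : β < 2) :
    S β 3 = val β (wordSeq [0,0,1]) ∧
    (∀ n : ℕ, seqLe (wordSeq [0,0,1]) (shift^[n] (wordSeq [0,0,1])) ∧
      seqLt (shift^[n] (wordSeq [0,0,1])) (wordSeq [1,1,0])) ∧
    (∀ x : ℕ → ℕ, (∀ i, x i ≤ 1) → Function.minimalPeriod shift x = 3 →
      ¬ (∀ n : ℕ, seqLt (wordSeq [0,0,1]) (shift^[n] x) ∧
        seqLt (shift^[n] x) (wordSeq [1,1,0]))) := by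
  refine ⟨?_, part2, part3⟩
  rw [val001 β hβ2]
  exact part1 β hβ1 hβ2 hβ3
end
end

section
/- For the tribonacci number β and every m ∈ ℕ, S_β(3m+2) = [(01(011)^m)^∞]_β = (1 + β − β^{3m+1} − β^{3m+3}) / ((1 − β^3)(β^{3m+2} − 1)). -/
open Function Filter

noncomputable section

set_option linter.unusedSectionVars false
set_option linter.unusedVariables false

namespace Stmt14
open scoped Classical
variable {β x : ℝ} {m : ℕ}

/-- closed form of the critical value -/
def Vv (β : ℝ) (m : ℕ) : ℝ :=
  (1 + β - β ^ (3*m+1) - β ^ (3*m+3)) / ((1 - β^3) * (β^(3*m+2) - 1))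

section
variable {β : ℝ} {m : ℕ}

lemma bpos (hβ2 : 1 < β) : 0 < β := lt_trans one_pos hβ2
lemma bne (hβ2 : 1 < β) : β ≠ 0 := ne_of_gt (bpos hβ2)

lemma hgold (hβ1 : β ^ 3 = β ^ 2 + β + 1) (hβ2 : 1 < β) : β + 1 < β^2 := by nlinarith

lemma hBge1 (hβ2 : 1 < β) : (1:ℝ) ≤ β^(3*m) := one_le_pow₀ (le_of_lt hβ2)

lemma hd1 (hβ2 : 1 < β) : 0 < β^2*β^(3*m) - 1 := by nlinarith [hBge1 (m := m) hβ2]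

lemma hd2 (hβ2 : 1 < β) : 1 - β^3 < 0 := by nlinarith [mul_pos (sub_pos.2 hβ2) (show (0:ℝ) < β^2+β+1 by positivity)]

lemma Vv_eq2 (hβ1 : β ^ 3 = β ^ 2 + β + 1) (hβ2 : 1 < β) :
    Vv β m = (β*β^(3*m) + β^(3*m) - 1)/(β*(β^2*β^(3*m)-1)) := by
  have h1 := hd1 (m := m) hβ2
  have h2 := hd2 hβ2
  have hb := bpos hβ2
  unfold Vv
  rw [pow_add, pow_add, pow_add]
  rw [div_eq_div_iff (by nlinarith) (by positivity)]
  linear_combination ((β^(3*m)-1)*(β^2*β^(3*m)-1)) * hβ1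

lemma hv_lt (hβ1 : β ^ 3 = β ^ 2 + β + 1) (hβ2 : 1 < β) : Vv β m < 1/β := by
  have h1 := hd1 (m := m) hβ2
  have hb := bpos hβ2
  have hB := hBge1 (m := m) hβ2
  have hg := hgold hβ1 hβ2
  rw [Vv_eq2 hβ1 hβ2, div_lt_div_iff₀ (by positivity) hb]
  nlinarith

lemma hv_gt (hβ1 : β ^ 3 = β ^ 2 + β + 1) (hβ2 : 1 < β) : 1/β^2 < Vv β m := by
  have h1 := hd1 (m := m) hβ2
  have hb := bpos hβ2
  have hB := hBge1 (m := m) hβ2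
  rw [Vv_eq2 hβ1 hβ2, div_lt_div_iff₀ (by positivity) (by positivity)]
  nlinarith

lemma hv_pos (hβ1 : β ^ 3 = β ^ 2 + β + 1) (hβ2 : 1 < β) : 0 < Vv β m :=
  lt_trans (by positivity) (hv_gt hβ1 hβ2)

lemma hv_lt1 (hβ1 : β ^ 3 = β ^ 2 + β + 1) (hβ2 : 1 < β) : Vv β m < 1 := by
  have := hv_lt (m := m) hβ1 hβ2
  have hb := bpos hβ2
  have : 1/β < 1 := by rw [div_lt_one hb]; exact hβ2
  linarith [hv_lt (m := m) hβ1 hβ2]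

lemma hrval (hβ2 : 1 < β) : (1/β^3 : ℝ)^m = (β^(3*m))⁻¹ := by
  rw [one_div, inv_pow, ← pow_mul]

lemma hveq (hβ1 : β ^ 3 = β ^ 2 + β + 1) (hβ2 : 1 < β) :
    β^2 * Vv β m - 1 = 1/β + (1/β^3)^m * (Vv β m - 1/β) := by
  have h1 := hd1 (m := m) hβ2
  have hb := bpos hβ2
  have hBpos : (0:ℝ) < β^(3*m) := by positivity
  rw [Vv_eq2 hβ1 hβ2, hrval hβ2]
  field_simp
  ring


end

section
variable {β : ℝ} {m : ℕ}

def Ff (β : ℝ) (m : ℕ) (n : ℕ) : ℝ := 1/β + (1/β^3)^n * (Vv β m - 1/β)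

section
variable (hβ1 : β ^ 3 = β ^ 2 + β + 1) (hβ2 : 1 < β)
include hβ1 hβ2

lemma hb1 : β^2 - β - 1 = 1/β := by
  have hb := bpos hβ2
  field_simp
  linear_combination hβ1

omit hβ1 in
lemma rpos : (0:ℝ) < (1/β^3) := by have := bpos hβ2; positivity

lemma rlt1 : (1/β^3 : ℝ) < 1 := by
  have hb := bpos hβ2
  rw [div_lt_one (by positivity)]
  nlinarith [mul_pos (sub_pos.2 hβ2) (show (0:ℝ) < β^2+β+1 by positivity)]

omit hβ1 hβ2 in
lemma Ff0 : Ff β m 0 = Vv β m := by simp [Ff]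

lemma Ff_lt : ∀ n, Ff β m n < 1/β := by
  intro n
  have h1 := hv_lt (m := m) hβ1 hβ2
  have h2 : (0:ℝ) < (1/β^3)^n := pow_pos (rpos hβ2) n
  unfold Ff; nlinarith

lemma Ff_ge : ∀ n, Vv β m ≤ Ff β m n := by
  intro n
  have h1 := hv_lt (m := m) hβ1 hβ2
  have h2 : (1/β^3:ℝ)^n ≤ 1 := pow_le_one₀ (le_of_lt (rpos hβ2)) (le_of_lt (rlt1 hβ1 hβ2))
  unfold Ff; nlinarith

lemma Ff_gt {n : ℕ} (hn : n ≠ 0) : Vv β m < Ff β m n := by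
  have h1 := hv_lt (m := m) hβ1 hβ2
  have h2 : (1/β^3:ℝ)^n < 1 := pow_lt_one₀ (le_of_lt (rpos hβ2)) (rlt1 hβ1 hβ2) hn
  unfold Ff; nlinarith

lemma Ff_ge1 {n : ℕ} (hn : 1 ≤ n) : Ff β m 1 ≤ Ff β m n := by
  have h1 := hv_lt (m := m) hβ1 hβ2
  have h2 : (1/β^3:ℝ)^n ≤ (1/β^3)^1 :=
    pow_le_pow_of_le_one (le_of_lt (rpos hβ2)) (le_of_lt (rlt1 hβ1 hβ2)) hn
  unfold Ff; nlinarith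

lemma Ff_pos : ∀ n, 0 < Ff β m n :=
  fun n => lt_of_lt_of_le (hv_pos hβ1 hβ2) (Ff_ge hβ1 hβ2 n)

lemma Ff_step (n : ℕ) : β^3 * Ff β m (n+1) - β - 1 = Ff β m n := by
  have hb := bpos hβ2
  have h1 := hb1 hβ1 hβ2
  have e : β^3 * ((1/β^3):ℝ) = 1 := by field_simp
  have e1 : β * ((1/β):ℝ) = 1 := by field_simp
  unfold Ff
  linear_combination h1 + ((1/β^3)^n * (Vv β m - 1/β)) * e + β^2 * e1

lemma Ff_gt_inv2 : ∀ n, 1/β^2 < Ff β m n :=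
  fun n => lt_of_lt_of_le (hv_gt hβ1 hβ2) (Ff_ge hβ1 hβ2 n)

lemma hFf1 (hβ3 : β < 2) : Vv β m < β^2 * Ff β m 1 - 1 := by
  have hb := bpos hβ2
  have h1 := hv_lt (m := m) hβ1 hβ2
  have h2 := hv_pos (m := m) hβ1 hβ2
  have h3 := hv_lt1 (m := m) hβ1 hβ2
  have key : β^2 * Ff β m 1 - 1 - Vv β m = (1 - Vv β m * (β-1))/β := by
    unfold Ff
    rw [pow_one]
    field_simp
    ring_nf
    linear_combination hβ1
  have h4 : Vv β m * (β - 1) < 1 := by nlinarith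
  have h5 : (0:ℝ) < (1 - Vv β m * (β-1))/β := div_pos (by linarith) hb
  linarith [key ▸ h5]


end
end

section
variable {β : ℝ} {m : ℕ}

lemma Tmap0 {x : ℝ} (h1 : 0 ≤ β*x) (h2 : β*x < 1) : Tmap β x = β*x :=
  Int.fract_eq_self.2 ⟨h1, h2⟩

lemma Tmap1 {x : ℝ} (h1 : 1 ≤ β*x) (h2 : β*x < 2) : Tmap β x = β*x - 1 := by
  unfold Tmap
  have h := Int.fract_sub_intCast (β*x) 1
  rw [← h]
  push_cast
  exact Int.fract_eq_self.2 ⟨by linarith, by linarith⟩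

section
variable (hβ1 : β ^ 3 = β ^ 2 + β + 1) (hβ2 : 1 < β) (hβ3 : β < 2)
include hβ1 hβ2 hβ3

/-- The basic three-step move: from `Ff n` with `n ≥ 1` the orbit goes
`Ff n ↦ β Ff n ↦ β² Ff n − 1 ↦ Ff (n-1)`. -/
lemma threestep {n : ℕ} (hn : 1 ≤ n) :
    Tmap β (Ff β m n) = β * Ff β m n ∧
    Tmap β (β * Ff β m n) = β^2 * Ff β m n - 1 ∧
    Tmap β (β^2 * Ff β m n - 1) = Ff β m (n-1) := by
  have hb := bpos hβ2
  have hflt := Ff_lt (m := m) hβ1 hβ2 n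
  have hfpos := Ff_pos (m := m) hβ1 hβ2 n
  have hfinv2 := Ff_gt_inv2 (m := m) hβ1 hβ2 n
  have hb1 : β * Ff β m n < 1 := by
    have : β * Ff β m n < β * (1/β) := by exact mul_lt_mul_of_pos_left hflt hb
    rw [mul_one_div, div_self (ne_of_gt hb)] at this; exact this
  refine ⟨Tmap0 (by positivity) hb1, ?_, ?_⟩
  · have key1 : 1 ≤ β * (β * Ff β m n) := by
      have : β^2 * (1/β^2) ≤ β^2 * Ff β m n := by
        apply mul_le_mul_of_nonneg_left (le_of_lt hfinv2) (by positivity)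
      rw [mul_one_div, div_self (by positivity)] at this
      nlinarith
    have key2 : β * (β * Ff β m n) < 2 := by nlinarith
    rw [Tmap1 key1 key2]; ring
  · have hstep := Ff_step (m := m) hβ1 hβ2 (n-1)
    rw [Nat.sub_add_cancel hn] at hstep
    have hprev_ge : 0 ≤ Ff β m (n-1) := le_of_lt (Ff_pos hβ1 hβ2 _)
    have hprev_lt : Ff β m (n-1) < 1 := by
      have := Ff_lt (m := m) hβ1 hβ2 (n-1)
      have h1b : 1/β < 1 := by rw [div_lt_one hb]; exact hβ2
      linarith
    have hcalc : β * (β^2 * Ff β m n - 1) = Ff β m (n-1) + 1 := by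
      rw [← hstep]; ring
    rw [Tmap1 (by rw [hcalc]; linarith) (by rw [hcalc]; linarith), hcalc]
    ring

/-- Main orbit induction. -/
lemma orbit : ∀ k, k ≤ m →
    ((Tmap β)^[3*k+2] (Vv β m) = Ff β m (m - k) ∧
     ∀ j, 0 < j → j < 3*k+2 → Vv β m < (Tmap β)^[j] (Vv β m)) := by
  have hb := bpos hβ2
  have hvlt := hv_lt (m := m) hβ1 hβ2
  have hvgt := hv_gt (m := m) hβ1 hβ2
  have hvpos := hv_pos (m := m) hβ1 hβ2
  have hT1 : (Tmap β)^[1] (Vv β m) = β * Vv β m := by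
    rw [Function.iterate_one]
    apply Tmap0 (by positivity)
    calc β * Vv β m < β * (1/β) := mul_lt_mul_of_pos_left hvlt hb
    _ = 1 := by field_simp
  have hT2 : (Tmap β)^[2] (Vv β m) = Ff β m m := by
    have : (2:ℕ) = 1+1 := rfl
    rw [this, Function.iterate_add_apply, hT1, Function.iterate_one]
    have e1 : 1 ≤ β * (β * Vv β m) := by
      have : β^2 * (1/β^2) ≤ β^2 * Vv β m := mul_le_mul_of_nonneg_left (le_of_lt hvgt) (by positivity)
      rw [mul_one_div, div_self (by positivity)] at this
      nlinarith
    have e2 : β * (β * Vv β m) < 2 := by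
      have h1 : β * Vv β m < 1 := by
        calc β * Vv β m < β * (1/β) := mul_lt_mul_of_pos_left hvlt hb
        _ = 1 := by field_simp
      nlinarith
    rw [Tmap1 e1 e2]
    have := hveq (m := m) hβ1 hβ2
    unfold Ff
    rw [← this]; ring
  intro k
  induction k with
  | zero =>
    intro _
    constructor
    · simpa using hT2
    · intro j hj1 hj2
      have hj : j = 1 := by omega
      subst hj
      rw [hT1]; nlinarith
  | succ k ih =>
    intro hk1
    have hkm : k ≤ m := le_of_lt (Nat.lt_of_succ_le hk1)
    obtain ⟨hit, hstrict⟩ := ih hkm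
    have hn1 : 1 ≤ m - k := by omega
    have hnne : m - k ≠ 0 := by omega
    obtain ⟨s1, s2, s3⟩ := threestep (m := m) hβ1 hβ2 hβ3 hn1
    have e1 : (Tmap β)^[3*k+3] (Vv β m) = β * Ff β m (m-k) := by
      have : 3*k+3 = (3*k+2)+1 := by ring
      rw [this, Function.iterate_succ_apply', hit, s1]
    have e2 : (Tmap β)^[3*k+4] (Vv β m) = β^2 * Ff β m (m-k) - 1 := by
      have : 3*k+4 = (3*k+3)+1 := by ring
      rw [this, Function.iterate_succ_apply', e1, s2]
    have e3 : (Tmap β)^[3*(k+1)+2] (Vv β m) = Ff β m (m-(k+1)) := by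
      have h5 : 3*(k+1)+2 = (3*k+4)+1 := by ring
      rw [h5, Function.iterate_succ_apply', e2, s3, show m-k-1 = m-(k+1) by omega]
    refine ⟨e3, ?_⟩
    intro j hj1 hj2
    by_cases hc : j < 3*k+2
    · exact hstrict j hj1 hc
    · have hfgt := Ff_gt (m := m) hβ1 hβ2 hnne
      have hfpos := Ff_pos (m := m) hβ1 hβ2 (m-k)
      have hj : j = 3*k+2 ∨ j = 3*k+3 ∨ j = 3*k+4 := by omega
      rcases hj with h|h|h <;> subst h
      · rw [hit]; exact hfgt
      · rw [e1]; nlinarith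
      · rw [e2]
        have h6 := hFf1 (m := m) hβ1 hβ2 hβ3
        have h7 := Ff_ge1 (m := m) hβ1 hβ2 hn1
        nlinarith

lemma Tp_fix : (Tmap β)^[3*m+2] (Vv β m) = Vv β m := by
  have h := (orbit (m := m) hβ1 hβ2 hβ3 m le_rfl).1
  rwa [Nat.sub_self, Ff0] at h

lemma orbit_strict : ∀ j, 0 < j → j < 3*m+2 → Vv β m < (Tmap β)^[j] (Vv β m) :=
  (orbit (m := m) hβ1 hβ2 hβ3 m le_rfl).2

lemma iter_mod : ∀ q j, (Tmap β)^[(3*m+2)*q + j] (Vv β m) = (Tmap β)^[j] (Vv β m) := by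
  intro q
  induction q with
  | zero => simp
  | succ q ih =>
    intro j
    have : (3*m+2)*(q+1) + j = ((3*m+2)*q + j) + (3*m+2) := by ring
    rw [this, Function.iterate_add_apply, Tp_fix hβ1 hβ2 hβ3, ih]

lemma orbit_ge : ∀ n, Vv β m ≤ (Tmap β)^[n] (Vv β m) := by
  intro n
  have hd : n = (3*m+2)*(n/(3*m+2)) + n % (3*m+2) := (Nat.div_add_mod n (3*m+2)).symm
  rw [hd, iter_mod hβ1 hβ2 hβ3]
  rcases Nat.eq_zero_or_pos (n % (3*m+2)) with h|h
  · rw [h]; simp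
  · exact le_of_lt (orbit_strict hβ1 hβ2 hβ3 _ h (Nat.mod_lt _ (by omega)))

lemma vK_mem : Vv β m ∈ Set.Ico (0:ℝ) 1 ∧ ∀ n : ℕ, Vv β m ≤ (Tmap β)^[n] (Vv β m) :=
  ⟨⟨le_of_lt (hv_pos hβ1 hβ2), hv_lt1 hβ1 hβ2⟩, orbit_ge hβ1 hβ2 hβ3⟩

lemma vmin : Function.minimalPeriod (Tmap β) (Vv β m) = 3*m+2 := by
  have hper : Function.IsPeriodicPt (Tmap β) (3*m+2) (Vv β m) := Tp_fix hβ1 hβ2 hβ3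
  have hdvd : Function.minimalPeriod (Tmap β) (Vv β m) ∣ (3*m+2) := hper.minimalPeriod_dvd
  have hpos : 0 < Function.minimalPeriod (Tmap β) (Vv β m) := hper.minimalPeriod_pos (by omega)
  have hle : Function.minimalPeriod (Tmap β) (Vv β m) ≤ 3*m+2 := Nat.le_of_dvd (by omega) hdvd
  rcases lt_or_eq_of_le hle with h|h
  · exfalso
    have hfix : (Tmap β)^[Function.minimalPeriod (Tmap β) (Vv β m)] (Vv β m) = Vv β m :=
      Function.iterate_minimalPeriod
    have := orbit_strict hβ1 hβ2 hβ3 _ hpos h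
    rw [hfix] at this
    exact lt_irrefl _ this
  · exact h

end
end

section
variable {β x : ℝ} {m : ℕ}

/-- iterates of x -/
def zf (β x : ℝ) (n : ℕ) : ℝ := (Tmap β)^[n] x
/-- next 0-position after a 0-position -/
def nxtF (β x : ℝ) (n : ℕ) : ℕ := if zf β x (n+2) < 1/β then n+2 else n+3
/-- iterated next-0 map -/
def MF (β x : ℝ) (n₀ i : ℕ) : ℕ := (nxtF β x)^[i] n₀
/-- inverse of the three-step map on 0-points -/
def gmap (β : ℝ) (u : ℝ) : ℝ := (β + 1 + u)/β^3
/-- the step at 0-position n is of type A (a `01` block) -/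
def tyA (β x : ℝ) (n : ℕ) : Prop := zf β x (n+2) < 1/β

/-- context for the upper bound -/
structure Ctx (β x : ℝ) (m : ℕ) : Prop where
  hβ1 : β ^ 3 = β ^ 2 + β + 1
  hβ2 : 1 < β
  hβ3 : β < 2
  hx0 : 0 ≤ x
  hx1 : x < 1
  hper : (Tmap β)^[3*m+2] x = x
  hlow : ∀ n, Vv β m < (Tmap β)^[n] x

namespace Ctx
variable (hc : Ctx β x m)
include hc

lemma zf_succ (n : ℕ) : zf β x (n+1) = Tmap β (zf β x n) := Function.iterate_succ_apply' _ _ _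

lemma z_lt1 : ∀ n, zf β x n < 1 := by
  intro n
  cases n with
  | zero => exact hc.hx1
  | succ n => rw [hc.zf_succ]; exact Int.fract_lt_one _

lemma z_low : ∀ n, Vv β m < zf β x n := hc.hlow

lemma z_gt : ∀ n, 1/β^2 < zf β x n :=
  fun n => lt_trans (hv_gt hc.hβ1 hc.hβ2) (hc.z_low n)

lemma z_pos : ∀ n, 0 < zf β x n := by
  intro n
  have hb := bpos hc.hβ2
  have := hc.z_gt n
  have h2 : (0:ℝ) < 1/β^2 := by positivity
  linarith

lemma z_per : ∀ n, zf β x (n + (3*m+2)) = zf β x n := by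
  intro n
  unfold zf
  rw [Function.iterate_add_apply, hc.hper]

lemma d0 {n : ℕ} (h : zf β x n < 1/β) : zf β x (n+1) = β * zf β x n := by
  have hb := bpos hc.hβ2
  rw [hc.zf_succ]
  apply Tmap0 (le_of_lt (mul_pos hb (hc.z_pos n)))
  calc β * zf β x n < β * (1/β) := mul_lt_mul_of_pos_left h hb
  _ = 1 := by field_simp

lemma d0' {n : ℕ} (h : zf β x n < 1/β) : ¬ (zf β x (n+1) < 1/β) := by
  have hb := bpos hc.hβ2
  rw [hc.d0 h]
  push_neg
  have h2 := hc.z_gt n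
  calc (1:ℝ)/β = β * (1/β^2) := by field_simp
  _ ≤ β * zf β x n := mul_le_mul_of_nonneg_left (le_of_lt h2) (le_of_lt hb)

lemma d1 {n : ℕ} (h : ¬ (zf β x n < 1/β)) : zf β x (n+1) = β * zf β x n - 1 := by
  have hb := bpos hc.hβ2
  push_neg at h
  rw [hc.zf_succ]
  apply Tmap1
  · calc (1:ℝ) = β * (1/β) := by field_simp
    _ ≤ β * zf β x n := mul_le_mul_of_nonneg_left h (le_of_lt hb)
  · have := hc.z_lt1 n
    nlinarith [hc.hβ3]

lemma no111 {n : ℕ} (h : ¬ (zf β x n < 1/β)) (h' : ¬ (zf β x (n+1) < 1/β)) :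
    zf β x (n+2) < 1/β := by
  have e1 := hc.d1 h
  have e2 := hc.d1 h'
  have h3 := hc.z_lt1 n
  have hbb := hb1 hc.hβ1 hc.hβ2
  have hb := bpos hc.hβ2
  rw [show n+2 = (n+1)+1 from rfl, e2, e1]
  nlinarith [mul_pos (mul_pos hb hb) (sub_pos.2 h3)]

lemma exists0 : ∃ n, zf β x n < 1/β := by
  by_cases h0 : zf β x 0 < 1/β
  · exact ⟨0, h0⟩
  by_cases h1 : zf β x 1 < 1/β
  · exact ⟨1, h1⟩
  exact ⟨2, hc.no111 h0 h1⟩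

lemma stepA {n : ℕ} (h : zf β x n < 1/β) :
    zf β x (n+2) = β^2 * zf β x n - 1 := by
  have e0 := hc.d0 h
  have e1 := hc.d1 (hc.d0' h)
  rw [show n+2 = (n+1)+1 from rfl, e1, e0]
  ring

lemma stepB {n : ℕ} (h : zf β x n < 1/β) (h2 : ¬ (zf β x (n+2) < 1/β)) :
    zf β x (n+3) < 1/β ∧ zf β x (n+3) = β^3 * zf β x n - β - 1 := by
  have e2 := hc.stepA h
  have e3 := hc.d1 h2
  constructor
  · exact hc.no111 (hc.d0' h) h2
  · rw [show n+3 = (n+2)+1 from rfl, e3, e2]; ring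

lemma nxt_0 {n : ℕ} (h : zf β x n < 1/β) : zf β x (nxtF β x n) < 1/β := by
  unfold nxtF
  by_cases h2 : zf β x (n+2) < 1/β
  · rw [if_pos h2]; exact h2
  · rw [if_neg h2]; exact (hc.stepB h h2).1

lemma nxt_gap {n : ℕ} (h : zf β x n < 1/β) :
    ∀ k, n < k → k < nxtF β x n → ¬ (zf β x k < 1/β) := by
  intro k hk1 hk2
  unfold nxtF at hk2
  by_cases h2 : zf β x (n+2) < 1/β
  · rw [if_pos h2] at hk2
    have : k = n+1 := by omega
    subst this
    exact hc.d0' h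
  · rw [if_neg h2] at hk2
    have : k = n+1 ∨ k = n+2 := by omega
    rcases this with h3|h3 <;> subst h3
    · exact hc.d0' h
    · exact h2

lemma nxt_valA {n : ℕ} (h : zf β x n < 1/β) (hA : tyA β x n) :
    nxtF β x n = n + 2 ∧ zf β x (nxtF β x n) = β^2 * zf β x n - 1 := by
  have hA' : zf β x (n+2) < 1/β := hA
  unfold nxtF
  rw [if_pos hA']
  exact ⟨rfl, hc.stepA h⟩

lemma nxt_valB {n : ℕ} (h : zf β x n < 1/β) (hB : ¬ tyA β x n) :
    nxtF β x n = n + 3 ∧ zf β x (nxtF β x n) = β^3 * zf β x n - β - 1 := by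
  have hB' : ¬ (zf β x (n+2) < 1/β) := hB
  unfold nxtF
  rw [if_neg hB']
  exact ⟨rfl, (hc.stepB h hB).2⟩


omit hc in
lemma MF_zero (n₀ : ℕ) : MF β x n₀ 0 = n₀ := rfl

omit hc in
lemma MF_succ (n₀ i : ℕ) : MF β x n₀ (i+1) = nxtF β x (MF β x n₀ i) :=
  Function.iterate_succ_apply' _ _ _

omit hc in
lemma MF_add (n₀ c i : ℕ) : MF β x n₀ (i + c) = MF β x (MF β x n₀ c) i :=
  Function.iterate_add_apply _ _ _ _

omit hc in
lemma nxt_mono (n : ℕ) : n < nxtF β x n ∧ nxtF β x n ≤ n + 3 := by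
  unfold nxtF; split <;> omega

omit hc in
lemma MF_mono (n₀ i : ℕ) : MF β x n₀ i < MF β x n₀ (i+1) := by
  rw [MF_succ]; exact (nxt_mono _).1

omit hc in
lemma MF_ge (n₀ : ℕ) : ∀ i, n₀ ≤ MF β x n₀ i := by
  intro i
  induction i with
  | zero => rfl
  | succ i ih => exact le_trans ih (le_of_lt (MF_mono n₀ i))

lemma MF_0 {n₀ : ℕ} (h : zf β x n₀ < 1/β) : ∀ i, zf β x (MF β x n₀ i) < 1/β := by
  intro i
  induction i with
  | zero => exact h
  | succ i ih => rw [MF_succ]; exact hc.nxt_0 ih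

open Finset in
lemma countA {n₀ : ℕ} (h : zf β x n₀ < 1/β) : ∀ j,
    MF β x n₀ j + ((Finset.range j).filter (fun i => tyA β x (MF β x n₀ i))).card = n₀ + 3*j := by
  classical
  intro j
  induction j with
  | zero => simp [MF_zero]
  | succ j ih =>
    rw [Finset.range_add_one, Finset.filter_insert]
    by_cases hA : tyA β x (MF β x n₀ j)
    · rw [if_pos hA, Finset.card_insert_of_notMem (by simp)]
      have := (hc.nxt_valA (hc.MF_0 h j) hA).1
      rw [MF_succ, this]
      omega
    · rw [if_neg hA]
      have := (hc.nxt_valB (hc.MF_0 h j) hA).1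
      rw [MF_succ, this]
      omega

lemma between {n₀ : ℕ} (h : zf β x n₀ < 1/β) : ∀ nn, n₀ ≤ nn →
    ∃ i, MF β x n₀ i ≤ nn ∧ nn < MF β x n₀ (i+1) := by
  intro nn
  induction nn with
  | zero =>
    intro h0
    refine ⟨0, by rw [MF_zero]; omega, ?_⟩
    have := MF_mono (β := β) (x := x) n₀ 0
    rw [MF_zero] at this
    omega
  | succ nn ih =>
    intro hle
    rcases Nat.lt_or_ge n₀ (nn+1) with hlt | hge
    · have hnn : n₀ ≤ nn := by omega
      obtain ⟨i, hi1, hi2⟩ := ih hnn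
      rcases Nat.lt_or_ge (nn+1) (MF β x n₀ (i+1)) with hc1 | hc1
      · exact ⟨i, by omega, hc1⟩
      · have he : MF β x n₀ (i+1) = nn+1 := by omega
        refine ⟨i+1, by omega, ?_⟩
        have := MF_mono (β := β) (x := x) n₀ (i+1)
        omega
    · have he : n₀ = nn+1 := by omega
      refine ⟨0, by rw [MF_zero]; omega, ?_⟩
      have := MF_mono (β := β) (x := x) n₀ 0
      rw [MF_zero] at this
      omega

lemma reach {n₀ : ℕ} (h : zf β x n₀ < 1/β) {nn : ℕ} (hle : n₀ ≤ nn)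
    (h2 : zf β x nn < 1/β) : ∃ i, MF β x n₀ i = nn := by
  obtain ⟨i, hi1, hi2⟩ := hc.between h nn hle
  rcases Nat.eq_or_lt_of_le hi1 with he | hlt
  · exact ⟨i, he⟩
  · exfalso
    have hgap := hc.nxt_gap (hc.MF_0 h i) nn hlt
    rw [← MF_succ] at hgap
    exact hgap hi2 h2

lemma cycle {n₀ : ℕ} (h : zf β x n₀ < 1/β) :
    ∃ I, 0 < I ∧ MF β x n₀ I = n₀ + (3*m+2) := by
  have h2 : zf β x (n₀ + (3*m+2)) < 1/β := by rw [hc.z_per]; exact h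
  obtain ⟨I, hI⟩ := hc.reach h (Nat.le_add_right _ _) h2
  refine ⟨I, ?_, hI⟩
  rcases Nat.eq_zero_or_pos I with h0 | h0
  · exfalso; rw [h0, MF_zero] at hI; omega
  · exact h0

omit hc in
lemma ginv (hβ2 : 1 < β) (u : ℝ) : gmap β (β^3*u - β - 1) = u := by
  have hb := bpos hβ2
  unfold gmap
  field_simp
  ring

lemma chain : ∀ k, ∀ n₀, zf β x n₀ < 1/β →
    (∀ i, i < k → ¬ tyA β x (MF β x n₀ i)) →
    (gmap β)^[k] (zf β x (MF β x n₀ k)) = zf β x n₀ := by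
  intro k
  induction k with
  | zero => intro n₀ _ _; rw [MF_zero, Function.iterate_zero_apply]
  | succ k ih =>
    intro n₀ h hno
    have hB0 : ¬ tyA β x (MF β x n₀ 0) := hno 0 (by omega)
    rw [MF_zero] at hB0
    obtain ⟨he, hv⟩ := hc.nxt_valB h hB0
    have h1 : zf β x (nxtF β x n₀) < 1/β := hc.nxt_0 h
    have ihh := ih (nxtF β x n₀) h1 (fun i hi => by
      have := hno (i+1) (by omega)
      rwa [show i+1 = i+1 from rfl, MF_add n₀ 1 i] at this)
    rw [show k+1 = k+1 from rfl, MF_add n₀ 1 k]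
    have hM1 : MF β x n₀ 1 = nxtF β x n₀ := by rw [MF_succ, MF_zero]
    rw [hM1, Function.iterate_succ_apply', ihh, hv, ginv hc.hβ2]

end Ctx

section
variable (hβ1 : β ^ 3 = β ^ 2 + β + 1) (hβ2 : 1 < β)
include hβ1 hβ2

omit hβ1 in
lemma glin : ∀ k (u w : ℝ), (gmap β)^[k] u - (gmap β)^[k] w = (1/β^3)^k * (u - w) := by
  have hb := bpos hβ2
  intro k
  induction k with
  | zero => intro u w; simp
  | succ k ih =>
    intro u w
    rw [Function.iterate_succ_apply', Function.iterate_succ_apply', pow_succ]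
    have e : gmap β ((gmap β)^[k] u) - gmap β ((gmap β)^[k] w)
        = (1/β^3) * ((gmap β)^[k] u - (gmap β)^[k] w) := by
      unfold gmap; field_simp; try ring
    rw [e, ih u w]
    ring

lemma gfix : ∀ k, (gmap β)^[k] ((1:ℝ)/β) = 1/β := by
  have hb := bpos hβ2
  intro k
  induction k with
  | zero => simp
  | succ k ih =>
    rw [Function.iterate_succ_apply', ih]
    unfold gmap
    rw [div_eq_div_iff (by positivity : (0:ℝ) < β^3).ne' hb.ne']
    have e1 : β * ((1:ℝ)/β) = 1 := by field_simp
    linear_combination e1 - hβ1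

lemma gclosed (k : ℕ) (u : ℝ) : (gmap β)^[k] u = 1/β + (1/β^3)^k * (u - 1/β) := by
  have h1 := glin hβ2 k u (1/β)
  rw [gfix hβ1 hβ2 k] at h1
  linarith

lemma gFf (n : ℕ) : gmap β (Ff β m n) = Ff β m (n+1) := by
  rw [← Ff_step hβ1 hβ2 n, Ctx.ginv hβ2]

lemma gV : (gmap β)^[m] (Vv β m) = β^2 * Vv β m - 1 := by
  rw [gclosed hβ1 hβ2, ← hveq hβ1 hβ2]

end

set_option maxHeartbeats 2000000 in
/-- The main upper bound: no periodic survivor above `Vv`. -/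
lemma key_upper (hc : Ctx β x m) : False := by
  classical
  have hβ1 := hc.hβ1; have hβ2 := hc.hβ2
  have hb := bpos hβ2
  have hrp := rpos (β := β) hβ2
  have hr1 := rlt1 hβ1 hβ2
  -- find a 0-position
  obtain ⟨n₁, hn₁⟩ := hc.exists0
  -- first cycle: find an A-position
  obtain ⟨I₁, hI₁pos, hI₁⟩ := hc.cycle hn₁
  have hcount₁ := hc.countA hn₁ I₁
  rw [hI₁] at hcount₁
  have hcard₁ : 0 < ((Finset.range I₁).filter (fun i => tyA β x (MF β x n₁ i))).card := by omega
  obtain ⟨i₁, hi₁f⟩ := Finset.card_pos.mp hcard₁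
  have hi₁A : tyA β x (MF β x n₁ i₁) := (Finset.mem_filter.mp hi₁f).2
  set n₀ := MF β x n₁ i₁ with hn₀def
  have h0 : zf β x n₀ < 1/β := hc.MF_0 hn₁ i₁
  have hA0 : tyA β x n₀ := hi₁A
  -- second cycle from the A-position n₀
  obtain ⟨I, hIpos, hI⟩ := hc.cycle h0
  have hcnt := hc.countA h0 I
  rw [hI] at hcnt
  set a := ((Finset.range I).filter (fun i => tyA β x (MF β x n₀ i))).card with hadef
  have hmod : a % 3 = 1 := by omega
  have htyAI : tyA β x (MF β x n₀ I) := by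
    rw [hI]
    unfold tyA
    rw [show n₀ + (3*m+2) + 2 = (n₀+2) + (3*m+2) by omega, hc.z_per]
    exact hA0
  rcases eq_or_ne a 1 with ha1 | hane
  · -- Case a = 1 : the orbit is the canonical one, z n₀ = Vv
    have hallB : ∀ i, 0 < i → i < I → ¬ tyA β x (MF β x n₀ i) := by
      intro i hi0 hiI htyA
      have hsub : ({0, i} : Finset ℕ) ⊆ (Finset.range I).filter (fun i => tyA β x (MF β x n₀ i)) := by
        intro j hj
        simp only [Finset.mem_insert, Finset.mem_singleton] at hj
        rcases hj with h|h <;> subst h <;> rw [Finset.mem_filter]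
        · exact ⟨Finset.mem_range.mpr hIpos, by rw [Ctx.MF_zero]; exact hA0⟩
        · exact ⟨Finset.mem_range.mpr hiI, htyA⟩
      have hcard2 := Finset.card_le_card hsub
      rw [Finset.card_insert_of_notMem (by simp [Ne.symm (Nat.ne_of_gt hi0)]),
        Finset.card_singleton] at hcard2
      omega
    have hIm : I = m + 1 := by omega
    -- the A-step at 0
    obtain ⟨heA, hvA⟩ := hc.nxt_valA h0 hA0
    have hM1 : MF β x n₀ 1 = nxtF β x n₀ := by rw [Ctx.MF_succ, Ctx.MF_zero]
    have h1 : zf β x (MF β x n₀ 1) < 1/β := hc.MF_0 h0 1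
    -- chain over the B-steps 1, ..., I-1
    have hch := hc.chain (I-1) (MF β x n₀ 1) h1 (fun i hi => by
      rw [← Ctx.MF_add n₀ 1 i]
      exact hallB (i+1) (by omega) (by omega))
    rw [← Ctx.MF_add n₀ 1 (I-1), show I-1+1 = I by omega, hI, hc.z_per, hM1, hvA] at hch
    -- hch : g^[I-1] (zf n₀) = β² zf n₀ − 1 ; with I-1 = m
    rw [show I - 1 = m by omega] at hch
    have hgv := gV (m := m) hβ1 hβ2
    have hlin := glin (β := β) hβ2 m (zf β x n₀) (Vv β m)
    rw [hch, hgv] at hlin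
    -- β²(z−V)−... gives z = V
    have hd : Vv β m < zf β x n₀ := hc.z_low n₀
    have hrm : (1/β^3:ℝ)^m ≤ 1 := pow_le_one₀ (le_of_lt hrp) (le_of_lt hr1)
    have hd' : (0:ℝ) < zf β x n₀ - Vv β m := sub_pos.2 hd
    have hle : (1/β^3:ℝ)^m * (zf β x n₀ - Vv β m) ≤ 1 * (zf β x n₀ - Vv β m) :=
      mul_le_mul_of_nonneg_right hrm (le_of_lt hd')
    have hgt : zf β x n₀ - Vv β m < β^2 * (zf β x n₀ - Vv β m) := by nlinarith [hd', hβ2]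
    have hlin2 : β^2 * (zf β x n₀ - Vv β m) = (1/β^3)^m * (zf β x n₀ - Vv β m) := by
      linarith [hlin]
    linarith
  · -- Case a ≥ 4
    have ha4 : 4 ≤ a := by omega
    -- the set of A-steps in [1, I]
    set AS := (Finset.Icc 1 I).filter (fun i => tyA β x (MF β x n₀ i)) with hASdef
    have hIAS : I ∈ AS := by
      rw [hASdef, Finset.mem_filter, Finset.mem_Icc]
      exact ⟨⟨hIpos, le_rfl⟩, htyAI⟩
    obtain ⟨i₀, hi₀AS, hi₀min⟩ := Finset.exists_min_image AS (fun i => zf β x (MF β x n₀ i)) ⟨I, hIAS⟩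
    have hi₀A : tyA β x (MF β x n₀ i₀) := (Finset.mem_filter.mp hi₀AS).2
    have hi₀Icc := Finset.mem_Icc.mp (Finset.mem_filter.mp hi₀AS).1
    -- the previous A-step
    set PS := (Finset.range i₀).filter (fun i => tyA β x (MF β x n₀ i)) with hPSdef
    have h0PS : 0 ∈ PS := by
      rw [hPSdef, Finset.mem_filter, Finset.mem_range]
      exact ⟨by omega, by rw [Ctx.MF_zero]; exact hA0⟩
    obtain ⟨j₀, hj₀PS, hj₀max⟩ := Finset.exists_max_image PS id ⟨0, h0PS⟩
    have hj₀A : tyA β x (MF β x n₀ j₀) := (Finset.mem_filter.mp hj₀PS).2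
    have hj₀lt : j₀ < i₀ := Finset.mem_range.mp (Finset.mem_filter.mp hj₀PS).1
    have hnoA : ∀ i, j₀ < i → i < i₀ → ¬ tyA β x (MF β x n₀ i) := by
      intro i h1 h2 hty
      have : i ∈ PS := by
        rw [hPSdef, Finset.mem_filter, Finset.mem_range]; exact ⟨h2, hty⟩
      have := hj₀max i this
      simp only [id] at this
      omega
    set gk := i₀ - j₀ - 1 with hgkdef
    -- gap bound : gk ≤ m - 2
    have hgap : gk + a ≤ I := by
      have hsub : Finset.Ioo j₀ i₀ ⊆ (Finset.range I).filter (fun i => ¬ tyA β x (MF β x n₀ i)) := by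
        intro i hi
        rw [Finset.mem_Ioo] at hi
        rw [Finset.mem_filter, Finset.mem_range]
        exact ⟨by omega, hnoA i hi.1 hi.2⟩
      have h1 := Finset.card_le_card hsub
      rw [Nat.card_Ioo] at h1
      have h2 := Finset.card_filter_add_card_filter_not
        (s := Finset.range I) (p := fun i => tyA β x (MF β x n₀ i))
      rw [Finset.card_range] at h2
      omega
    have hgkm : gk ≤ m - 2 ∧ 2 ≤ m := by omega
    -- chain over the B-steps j₀+1, ..., i₀-1
    have hstart : zf β x (MF β x n₀ (j₀+1)) < 1/β := hc.MF_0 h0 (j₀+1)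
    have hch := hc.chain gk (MF β x n₀ (j₀+1)) hstart (fun i hi => by
      rw [← Ctx.MF_add n₀ (j₀+1) i]
      exact hnoA (i+(j₀+1)) (by omega) (by omega))
    rw [← Ctx.MF_add n₀ (j₀+1) gk, show gk + (j₀+1) = i₀ by omega] at hch
    -- the A-step at j₀
    obtain ⟨heA, hvA⟩ := hc.nxt_valA (hc.MF_0 h0 j₀) hj₀A
    rw [← Ctx.MF_succ] at hvA
    rw [hvA] at hch
    -- hch : g^[gk] (zf (MF n₀ i₀)) = β² zf (MF n₀ j₀) − 1
    set z' := zf β x (MF β x n₀ i₀) with hz'def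
    set z'' := zf β x (MF β x n₀ j₀) with hz''def
    have hz'le : z' ≤ z'' := by
      rcases Nat.eq_zero_or_pos j₀ with hj0 | hj0
      · have : z'' = zf β x (MF β x n₀ I) := by
          rw [hz''def, hj0, Ctx.MF_zero, hI, hc.z_per]
        rw [this]
        exact hi₀min I hIAS
      · have : j₀ ∈ AS := by
          rw [hASdef, Finset.mem_filter, Finset.mem_Icc]
          exact ⟨⟨hj0, by omega⟩, hj₀A⟩
        exact hi₀min j₀ this
    have hz'lt : z' < 1/β := hc.MF_0 h0 i₀
    -- final contradiction
    rw [gclosed hβ1 hβ2] at hch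
    have hd : Vv β m < z' := hc.z_low _
    have hveq' := hveq (m := m) hβ1 hβ2
    have hvlt := hv_lt (m := m) hβ1 hβ2
    have hrm2 : (1/β^3:ℝ)^(m-2) ≤ (1/β^3)^gk :=
      pow_le_pow_of_le_one (le_of_lt hrp) (le_of_lt hr1) hgkm.1
    have hrm2' : (1/β^3:ℝ)^m ≤ (1/β^3)^(m-2) :=
      pow_le_pow_of_le_one (le_of_lt hrp) (le_of_lt hr1) (by omega)
    have hrm2le1 : (1/β^3:ℝ)^(m-2) ≤ 1 := pow_le_one₀ (le_of_lt hrp) (le_of_lt hr1)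
    -- β² z' − 1 ≤ β² z'' − 1 = 1/β + r^gk (z'−1/β) ≤ 1/β + r^{m−2}(z'−1/β)
    have hstep1 : β^2 * z' - 1 ≤ 1/β + (1/β^3)^gk * (z' - 1/β) := by nlinarith [hch]
    have hstep2 : (1/β^3:ℝ)^gk * (z' - 1/β) ≤ (1/β^3)^(m-2) * (z' - 1/β) :=
      mul_le_mul_of_nonpos_right hrm2 (by linarith)
    have hstep3 : (1/β^3:ℝ)^m * (Vv β m - 1/β) ≥ (1/β^3)^(m-2) * (Vv β m - 1/β) :=
      mul_le_mul_of_nonpos_right hrm2' (by linarith)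
    set R := ((1:ℝ)/β^3)^(m-2) with hRdef
    have e1 : R * (z' - 1/β) = R*z' - R*(1/β) := by ring
    have e2 : R * (Vv β m - 1/β) = R*(Vv β m) - R*(1/β) := by ring
    have e3 : (1/β^3:ℝ)^gk * (z' - 1/β) ≤ R*z' - R*(1/β) := by rw [← e1]; exact hstep2
    have hkey : β^2 * (z' - Vv β m) ≤ R * (z' - Vv β m) := by
      have : β^2*z' - 1 ≤ 1/β + (R*z' - R*(1/β)) := le_trans hstep1 (by linarith [e3])
      have h4 : β^2*(Vv β m) - 1 ≥ 1/β + (R*(Vv β m) - R*(1/β)) := by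
        rw [← e2]; linarith [hveq', hstep3]
      have g1 : β^2*(z' - Vv β m) = β^2*z' - β^2*(Vv β m) := by ring
      have g2 : R*(z' - Vv β m) = R*z' - R*(Vv β m) := by ring
      rw [g1, g2]
      linarith [this, h4]
    have hd' : (0:ℝ) < z' - Vv β m := sub_pos.2 hd
    have hle2 : R * (z' - Vv β m) ≤ 1 * (z' - Vv β m) :=
      mul_le_mul_of_nonneg_right hrm2le1 (le_of_lt hd')
    have hb2 : (1:ℝ) < β^2 := by nlinarith [hβ2]
    have hgt2 := mul_lt_mul_of_pos_right hb2 hd'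
    rw [one_mul] at hgt2
    linarith [hkey, hle2, hgt2]

end

section
variable {β : ℝ} {m : ℕ}

lemma getD_le_one (l : List ℕ) (hl : ∀ a ∈ l, a ≤ 1) (j : ℕ) : l.getD j 0 ≤ 1 := by
  rcases Nat.lt_or_ge j l.length with h | h
  · rw [List.getD_eq_getElem l 0 h]
    exact hl _ (l.getElem_mem h)
  · rw [List.getD_eq_default l 0 h]
    omega

lemma getD_append_left (l l' : List ℕ) (n : ℕ) (h : n < l.length) :
    (l ++ l').getD n 0 = l.getD n 0 := by
  simp [List.getD, List.getElem?_append, h]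

lemma getD_append_right (l l' : List ℕ) (n : ℕ) (h : l.length ≤ n) :
    (l ++ l').getD n 0 = l'.getD (n - l.length) 0 := by
  simp [List.getD, List.getElem?_append, Nat.not_lt.2 h]

lemma flat_getD : ∀ (m j : ℕ), j < 3*m →
    ((List.replicate m ([0,1,1] : List ℕ)).flatten).getD j 0 = [0,1,1].getD (j % 3) 0 := by
  intro m
  induction m with
  | zero => omega
  | succ m ih =>
    intro j hj
    rw [List.replicate_succ, List.flatten_cons]
    rcases Nat.lt_or_ge j 3 with h3 | h3
    · rw [getD_append_left _ _ _ (by simpa using h3), Nat.mod_eq_of_lt h3]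
    · rw [getD_append_right _ _ _ (by simpa using h3)]
      simp only [List.length_cons, List.length_nil]
      rw [ih (j-3) (by omega), show (j-3) % 3 = j % 3 by omega]

section
variable (hβ1 : β ^ 3 = β ^ 2 + β + 1) (hβ2 : 1 < β)
include hβ1 hβ2

/-- geometric part -/
lemma Asum : ∀ m : ℕ, ∑ i ∈ Finset.range (3*m), (([0,1,1]:List ℕ).getD (i % 3) 0 : ℝ)/β^(i+3)
    = (1 - (1/β^3)^m)/β^3 := by
  have hb := bpos hβ2
  intro m
  induction m with
  | zero => simp
  | succ m ih =>
    rw [show 3*(m+1) = (3*m) + 1 + 1 + 1 by ring]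
    rw [Finset.sum_range_succ, Finset.sum_range_succ, Finset.sum_range_succ, ih]
    rw [show (3*m) % 3 = 0 by omega, show (3*m+1) % 3 = 1 by omega,
        show (3*m+1+1) % 3 = 2 by omega]
    have hP : (0:ℝ) < β^(3*m) := by positivity
    have e1 : (β:ℝ)^(3*m+1+1+3) = β^(3*m)*β^5 := by rw [← pow_add]
    have e2 : (β:ℝ)^(3*m+1+3) = β^(3*m)*β^4 := by rw [← pow_add]
    have e3 : (β:ℝ)^(3*m+3) = β^(3*m)*β^3 := by rw [← pow_add]
    have e5 : ((β:ℝ)^3)^m = β^(3*m) := by rw [← pow_mul]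
    have e6 : ((β:ℝ)^3)^(m+1) = β^(3*m) * β^3 := by rw [← pow_mul, ← pow_add]; ring_nf
    simp only [List.getD]
    norm_num
    rw [e1, e2, e5, e6]
    field_simp
    linear_combination (-1 : ℝ) * hβ1

set_option maxHeartbeats 1000000 in
lemma val_word :
    val β (wordSeq ([0,1] ++ (List.replicate m ([0,1,1] : List ℕ)).flatten)) = Vv β m := by
  have hb := bpos hβ2
  set w := [0,1] ++ (List.replicate m ([0,1,1] : List ℕ)).flatten with hw
  have hlen : w.length = 3*m+2 := by
    rw [hw]
    simp [List.length_flatten, List.map_replicate]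
    omega
  have hwle : ∀ a ∈ w, a ≤ 1 := by
    intro a ha
    rw [hw, List.mem_append] at ha
    rcases ha with h | h
    · fin_cases h <;> omega
    · rw [List.mem_flatten] at h
      obtain ⟨l, hl, hal⟩ := h
      rw [List.mem_replicate] at hl
      rw [hl.2] at hal
      fin_cases hal <;> omega
  have hdig : ∀ i, (wordSeq w i : ℝ) ≤ 1 := by
    intro i
    have := getD_le_one w hwle (i % w.length)
    exact_mod_cast this
  have hsummable : Summable (fun i => (wordSeq w i : ℝ)/β^(i+1)) := by
    have hg : Summable (fun i : ℕ => ((1:ℝ)/β)^i * (1/β)) :=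
      Summable.mul_right _ (summable_geometric_of_lt_one (by positivity)
        (by rw [div_lt_one hb]; exact hβ2))
    refine Summable.of_nonneg_of_le (fun i => ?_) (fun i => ?_) hg
    · positivity
    · have e : ((1:ℝ)/β)^i * (1/β) = 1/β^(i+1) := by
        rw [← pow_succ, one_div_pow]
      rw [e]
      exact (div_le_div_iff_of_pos_right (by positivity)).2 (hdig i)
  have hper : ∀ i, wordSeq w (i + (3*m+2)) = wordSeq w i := by
    intro i
    unfold wordSeq
    rw [hlen]
    congr 1
    exact Nat.add_mod_right i (3*m+2)
  have hsplit := (Summable.sum_add_tsum_nat_add (f := fun i => (wordSeq w i : ℝ)/β^(i+1)) (3*m+2)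
    hsummable).symm
  have htail : ∑' i, (wordSeq w (i+(3*m+2)) : ℝ)/β^((i+(3*m+2))+1)
      = (1/β^(3*m+2)) * ∑' i, (wordSeq w i : ℝ)/β^(i+1) := by
    rw [← tsum_mul_left]
    congr 1
    funext i
    rw [hper i, show (i+(3*m+2))+1 = (i+1)+(3*m+2) by omega, pow_add]
    ring
  have hhead : ∑ i ∈ Finset.range (3*m+2), (wordSeq w i : ℝ)/β^(i+1)
      = 1/β^2 + (1 - (1/β^3)^m)/β^3 := by
    have hw0 : ∀ i, i < 3*m+2 → wordSeq w i = w.getD i 0 := by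
      intro i hi; unfold wordSeq; rw [hlen, Nat.mod_eq_of_lt hi]
    rw [show 3*m+2 = 2 + 3*m by ring]
    rw [Finset.sum_range_add]
    have h2 : ∑ i ∈ Finset.range 2, (wordSeq w i : ℝ)/β^(i+1) = 1/β^2 := by
      rw [Finset.sum_range_succ, Finset.sum_range_one]
      rw [hw0 0 (by omega), hw0 1 (by omega), hw]
      norm_num [List.getD]
    have h3 : ∑ i ∈ Finset.range (3*m), (wordSeq w (2+i) : ℝ)/β^((2+i)+1)
        = ∑ i ∈ Finset.range (3*m), (([0,1,1]:List ℕ).getD (i % 3) 0 : ℝ)/β^(i+3) := by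
      apply Finset.sum_congr rfl
      intro i hi
      rw [Finset.mem_range] at hi
      rw [hw0 (2+i) (by omega), hw]
      rw [getD_append_right _ _ _ (by simp)]
      simp only [List.length_cons, List.length_nil]
      rw [show 2+i-2 = i by omega, flat_getD m i (by omega), show (2+i)+1 = i+3 by omega]
    rw [h2, h3, Asum hβ1 hβ2]
  set Vl : ℝ := 1/β^2 + (1 - (1/β^3)^m)/β^3 with hVl
  have heq : (∑' i, (wordSeq w i : ℝ)/β^(i+1))
      = Vl + (1/β^(3*m+2)) * ∑' i, (wordSeq w i : ℝ)/β^(i+1) := by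
    conv_lhs => rw [hsplit]
    rw [hhead, htail]
  have hlt : (1:ℝ) < β^(3*m+2) := one_lt_pow₀ hβ2 (by omega)
  have hne : 1 - (1:ℝ)/β^(3*m+2) ≠ 0 := by
    have : (1:ℝ)/β^(3*m+2) < 1 := by rw [div_lt_one (by positivity)]; exact hlt
    intro hcon
    rw [sub_eq_zero] at hcon
    linarith [hcon]
  have hval1 : val β (wordSeq w) * (1 - 1/β^(3*m+2)) = Vl := by
    unfold val
    linear_combination heq
  have hVv1 : Vv β m * (1 - 1/β^(3*m+2)) = Vl := by
    rw [Vv_eq2 hβ1 hβ2, hVl, hrval hβ2, show (3*m+2) = 3*m+2 from rfl,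
      show (β:ℝ)^(3*m+2) = β^(3*m)*β^2 by rw [← pow_add]]
    have hP : (0:ℝ) < β^(3*m) := by positivity
    have hd1 : (0:ℝ) < β^2*β^(3*m) - 1 := by nlinarith [one_le_pow₀ (le_of_lt hβ2) (n := 3*m)]
    field_simp
    ring
  have := hval1.trans hVv1.symm
  exact mul_right_cancel₀ hne this

end
end

section
variable {β : ℝ} {m : ℕ}
variable (hβ1 : β ^ 3 = β ^ 2 + β + 1) (hβ2 : 1 < β) (hβ3 : β < 2)
include hβ1 hβ2 hβ3

lemma S_eq : S β (3*m+2) = Vv β m := by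
  have hVmem : Vv β m ∈ {t | t ∈ Set.Ico (0:ℝ) 1 ∧
      ∃ y ∈ K β t, Function.minimalPeriod (Tmap β) y = 3*m+2} := by
    refine ⟨⟨le_of_lt (hv_pos hβ1 hβ2), hv_lt1 hβ1 hβ2⟩, Vv β m, ?_, vmin hβ1 hβ2 hβ3⟩
    exact ⟨⟨le_of_lt (hv_pos hβ1 hβ2), hv_lt1 hβ1 hβ2⟩, orbit_ge hβ1 hβ2 hβ3⟩
  have hub : ∀ t ∈ {t | t ∈ Set.Ico (0:ℝ) 1 ∧
      ∃ y ∈ K β t, Function.minimalPeriod (Tmap β) y = 3*m+2}, t ≤ Vv β m := by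
    rintro t ⟨⟨ht0, ht1⟩, y, ⟨⟨hy0, hy1⟩, hK⟩, hmin⟩
    by_contra hcon
    push_neg at hcon
    have hper : (Tmap β)^[3*m+2] y = y := by
      conv_lhs => rw [← hmin]
      exact Function.iterate_minimalPeriod
    exact key_upper ⟨hβ1, hβ2, hβ3, hy0, hy1, hper,
      fun n => lt_of_lt_of_le hcon (hK n)⟩
  unfold S
  exact le_antisymm (csSup_le ⟨Vv β m, hVmem⟩ hub)
    (le_csSup ⟨Vv β m, fun t ht => hub t ht⟩ hVmem)

end
end Stmt14

theorem stmt14 (β : ℝ) (hβ1 : β ^ 3 = β ^ 2 + β + 1) (hβ2 : 1 < β) (hβ3 : β < 2) (m : ℕ) :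
    S β (3 * m + 2) = val β (wordSeq ([0,1] ++ (List.replicate m ([0,1,1] : List ℕ)).flatten)) ∧
    S β (3 * m + 2) = (1 + β - β ^ (3 * m + 1) - β ^ (3 * m + 3)) /
      ((1 - β ^ 3) * (β ^ (3 * m + 2) - 1)) := by
  have h1 : S β (3*m+2) = Stmt14.Vv β m := Stmt14.S_eq hβ1 hβ2 hβ3
  constructor
  · rw [h1, Stmt14.val_word hβ1 hβ2]
  · rw [h1]; rfl
end
end

section
/- Let m ∈ ℕ. No periodic binary sequence x of smallest period 3m+2 satisfies (01(011)^m)^∞ ≺ σ^n(x) ≺ (110)^∞ for all n ≥ 0. -/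
open Function Filter

noncomputable section

/-! Auxiliary lemmas -/

lemma shift_iterate (x : ℕ → ℕ) (n : ℕ) : shift^[n] x = fun i => x (i + n) := by
  induction n with
  | zero => simp
  | succ k ih =>
    funext i
    rw [Function.iterate_succ_apply', ih]
    show x (i + 1 + k) = x (i + (k+1))
    congr 1; omega

/-- The lower-bound sequence. -/
def A (m : ℕ) : ℕ → ℕ := wordSeq ([0,1] ++ (List.replicate m ([0,1,1] : List ℕ)).flatten)

lemma aw_length (m : ℕ) : ([0,1] ++ (List.replicate m ([0,1,1] : List ℕ)).flatten).length = 3*m+2 := by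
  simp [List.length_flatten]; ring

lemma flat_getD (m t r : ℕ) (ht : t < m) (hr : r < 3) :
    ((List.replicate m ([0,1,1] : List ℕ)).flatten).getD (3*t+r) 0 = [0,1,1].getD r 0 := by
  induction m generalizing t with
  | zero => omega
  | succ k ih =>
    rw [List.replicate_succ, List.flatten_cons]
    rcases t with _ | s
    · rw [List.getD_append _ _ _ _ (by simp; omega)]
      simp
    · rw [List.getD_append_right _ _ _ _ (by simp; omega)]
      have e : 3*(s+1)+r - ([0,1,1]:List ℕ).length = 3*s+r := by simp; omega
      rw [e, ih s (by omega)]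

lemma A_small (m i : ℕ) (hi : i < 3*m+2) :
    A m i = ([0,1] ++ (List.replicate m ([0,1,1] : List ℕ)).flatten).getD i 0 := by
  unfold A wordSeq
  rw [aw_length, Nat.mod_eq_of_lt hi]

lemma A_zero (m : ℕ) : A m 0 = 0 := by
  rw [A_small m 0 (by omega)]; rfl

lemma A_one (m : ℕ) : A m 1 = 1 := by
  rw [A_small m 1 (by omega)]; rfl

lemma A_block (m t : ℕ) (ht : t < m) :
    A m (2+3*t) = 0 ∧ A m (3+3*t) = 1 ∧ A m (4+3*t) = 1 := by
  have key : ∀ r < 3, A m (2+3*t+r) = [0,1,1].getD r 0 := by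
    intro r hr
    rw [A_small m (2+3*t+r) (by omega)]
    rw [List.getD_append_right _ _ _ _ (by simp; omega)]
    have e : 2+3*t+r - ([0,1]:List ℕ).length = 3*t+r := by simp; omega
    rw [e, flat_getD m t r ht hr]
  refine ⟨?_, ?_, ?_⟩
  · have := key 0 (by omega); simpa using this
  · have := key 1 (by omega); rw [show 3+3*t = 2+3*t+1 by omega]; rw [this]; rfl
  · have := key 2 (by omega); rw [show 4+3*t = 2+3*t+2 by omega]; rw [this]; rfl

lemma A_per (m i : ℕ) : A m (i + (3*m+2)) = A m i := by
  unfold A wordSeq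
  rw [aw_length]
  congr 1
  exact Nat.add_mod_right i (3*m+2)

lemma A_per' (m : ℕ) : ∀ q i, A m (i + (3*m+2)*q) = A m i := by
  intro q
  induction q with
  | zero => simp
  | succ k ih =>
    intro i
    have e : i + (3*m+2)*(k+1) = (i + (3*m+2)*k) + (3*m+2) := by ring
    rw [e, A_per, ih]

lemma wB (j : ℕ) : wordSeq [1,1,0] j = if j % 3 = 2 then 0 else 1 := by
  unfold wordSeq
  have h3 : ([1,1,0]:List ℕ).length = 3 := rfl
  rw [h3]
  have := Nat.mod_lt j (show 0 < 3 by omega)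
  interval_cases h : j % 3 <;> rfl

theorem stmt15 (m : ℕ) (x : ℕ → ℕ) (hx : ∀ i, x i ≤ 1)
    (hper : Function.minimalPeriod shift x = 3 * m + 2)
    (h : ∀ n : ℕ, seqLt (wordSeq ([0,1] ++ (List.replicate m ([0,1,1] : List ℕ)).flatten)) (shift^[n] x) ∧
      seqLt (shift^[n] x) (wordSeq [1,1,0])) : False := by
  have hlow : ∀ n, seqLt (A m) (shift^[n] x) := fun n => (h n).1
  have hb : ∀ i, x i = 0 ∨ x i = 1 := fun i => by have := hx i; omega
  -- periodicity
  have hperiod : ∀ i, x (i + (3*m+2)) = x i := by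
    intro i
    have h1 := Function.iterate_minimalPeriod (f := shift) (x := x)
    rw [hper] at h1
    have := congrFun h1 i
    rw [shift_iterate] at this
    exact this
  have hperiod' : ∀ q i, x (i + (3*m+2)*q) = x i := by
    intro q
    induction q with
    | zero => simp
    | succ k ih =>
      intro i
      have e : i + (3*m+2)*(k+1) = (i + (3*m+2)*k) + (3*m+2) := by ring
      rw [e, hperiod, ih]
  have hs : ∀ n j, shift^[n] x j = x (n + j) := by
    intro n j; rw [shift_iterate]; show x (j + n) = x (n + j); congr 1; omega
  -- no 111
  have no111 : ∀ n, x n = 1 → x (n+1) = 1 → x (n+2) = 0 := by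
    intro n h1 h2
    rcases hb (n+2) with h3 | h3
    · exact h3
    exfalso
    obtain ⟨k, hag, hlt⟩ := (h n).2
    rw [hs, wB] at hlt
    have hk3 : k < 3 := by
      by_contra hk
      push_neg at hk
      have := hag 2 (by omega)
      rw [hs, wB] at this
      norm_num at this
      omega
    interval_cases k
    · norm_num at hlt; omega
    · norm_num at hlt; omega
    · norm_num at hlt
  -- no 00
  have no00 : ∀ n, x n = 0 → x (n+1) = 1 := by
    intro n h0
    rcases hb (n+1) with h1 | h1
    swap
    · exact h1
    exfalso
    obtain ⟨k, hag, hlt⟩ := hlow n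
    rw [hs] at hlt
    have hk2 : k < 2 := by
      by_contra hk
      push_neg at hk
      have := hag 1 (by omega)
      rw [hs, A_one] at this
      omega
    interval_cases k
    · rw [A_zero, Nat.add_zero] at hlt; omega
    · rw [A_one] at hlt; omega
  -- existence of 010
  obtain ⟨n, h0, h1, h2⟩ : ∃ n, x n = 0 ∧ x (n+1) = 1 ∧ x (n+2) = 0 := by
    by_contra hc
    push_neg at hc
    have H : ∀ n, x n = 0 → x (n+2) = 1 := by
      intro n h0
      rcases hb (n+2) with h2 | h2
      · exact absurd h2 (hc n h0 (no00 n h0))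
      · exact h2
    obtain ⟨n₀, hz⟩ : ∃ n₀, x n₀ = 0 := by
      rcases hb 0 with h' | h'
      · exact ⟨0, h'⟩
      rcases hb 1 with h'' | h''
      · exact ⟨1, h''⟩
      · exact ⟨2, no111 0 h' h''⟩
    have hz3 : ∀ j, x (n₀ + 3*j) = 0 := by
      intro j
      induction j with
      | zero => simpa using hz
      | succ k ihk =>
        have ha := no00 _ ihk
        have hb2 := H _ ihk
        have hc2 := no111 (n₀+3*k+1) ha (by rw [show n₀+3*k+1+1 = n₀+3*k+2 by omega]; exact hb2)
        rw [show n₀+3*(k+1) = n₀+3*k+1+2 by omega]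
        exact hc2
    have e1 : x (n₀ + 3*m + 2) = 1 := H _ (hz3 m)
    have e2 : x (n₀ + 3*m + 2) = 0 := by
      have := hperiod n₀
      rw [show n₀ + (3*m+2) = n₀ + 3*m + 2 by omega] at this
      rw [this]; exact hz
    omega
  -- main induction: the m blocks after the 010 are all 011
  have key : ∀ t ≤ m,
      (∀ s < t, x (n+2+3*s) = 0 ∧ x (n+3+3*s) = 1 ∧ x (n+4+3*s) = 1) ∧ x (n+2+3*t) = 0 := by
    intro t
    induction t with
    | zero =>
      intro _
      exact ⟨fun s hs => by omega, by simpa using h2⟩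
    | succ s ih =>
      intro hsm
      obtain ⟨prev, hz⟩ := ih (by omega)
      have hB : x (n+3+3*s) = 1 := by
        have := no00 _ hz
        rw [show n+2+3*s+1 = n+3+3*s by omega] at this
        exact this
      have hC : x (n+4+3*s) = 1 := by
        rcases hb (n+4+3*s) with hc4 | hc4
        swap
        · exact hc4
        exfalso
        -- x agrees with A m on [0, 4+3s), and at 4+3s x is 0 < A = 1
        have agree : ∀ i < 4+3*s, x (n+i) = A m i := by
          intro i hi
          rcases Nat.lt_or_ge i 2 with hi2 | hi2
          · interval_cases i
            · rw [A_zero, Nat.add_zero]; exact h0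
            · rw [A_one]; exact h1
          · obtain ⟨q, r, hr3, hieq⟩ : ∃ q r, r < 3 ∧ i = 2+3*q+r :=
              ⟨(i-2)/3, (i-2)%3, by omega, by omega⟩
            subst hieq
            have hqs : q < s ∨ (q = s ∧ r ≤ 1) := by omega
            have hqm : q < m := by omega
            obtain ⟨hA0, hA1, hA2⟩ := A_block m q hqm
            interval_cases r
            · calc x (n + (2+3*q+0)) = x (n+2+3*q) := by congr 1; omega
                _ = 0 := by
                    rcases hqs with hq' | ⟨hq', _⟩
                    · exact (prev q hq').1
                    · subst hq'; exact hz
                _ = A m (2+3*q+0) := by rw [show 2+3*q+0 = 2+3*q by omega, hA0]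
            · calc x (n + (2+3*q+1)) = x (n+3+3*q) := by congr 1; omega
                _ = 1 := by
                    rcases hqs with hq' | ⟨hq', _⟩
                    · exact (prev q hq').2.1
                    · subst hq'; exact hB
                _ = A m (2+3*q+1) := by rw [show 2+3*q+1 = 3+3*q by omega, hA1]
            · calc x (n + (2+3*q+2)) = x (n+4+3*q) := by congr 1; omega
                _ = 1 := by
                    rcases hqs with hq' | ⟨hq', hr'⟩
                    · exact (prev q hq').2.2
                    · omega
                _ = A m (2+3*q+2) := by rw [show 2+3*q+2 = 4+3*q by omega, hA2]
        obtain ⟨k, hag, hlt⟩ := hlow n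
        rw [hs] at hlt
        obtain ⟨hA0, hA1, hA2⟩ := A_block m s (by omega)
        rcases Nat.lt_trichotomy k (4+3*s) with hk | hk | hk
        · rw [agree k hk] at hlt; omega
        · subst hk
          rw [hA2, show n+(4+3*s) = n+4+3*s by omega] at hlt
          omega
        · have := hag (4+3*s) hk
          rw [hs, hA2, show n+(4+3*s) = n+4+3*s by omega] at this
          omega
      have hD : x (n+2+3*(s+1)) = 0 := by
        have := no111 (n+3+3*s) hB (by rw [show n+3+3*s+1 = n+4+3*s by omega]; exact hC)
        rw [show n+2+3*(s+1) = n+3+3*s+2 by omega]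
        exact this
      refine ⟨?_, hD⟩
      intro s' hs'
      rcases Nat.lt_or_ge s' s with h' | h'
      · exact prev s' h'
      · have : s' = s := by omega
        subst this
        exact ⟨hz, hB, hC⟩
  obtain ⟨blocks, _⟩ := key m le_rfl
  -- x agrees with A on one full period starting at n
  have agree : ∀ i < 3*m+2, x (n+i) = A m i := by
    intro i hi
    rcases Nat.lt_or_ge i 2 with hi2 | hi2
    · interval_cases i
      · rw [A_zero, Nat.add_zero]; exact h0
      · rw [A_one]; exact h1
    · obtain ⟨q, r, hr3, hieq⟩ : ∃ q r, r < 3 ∧ i = 2+3*q+r :=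
        ⟨(i-2)/3, (i-2)%3, by omega, by omega⟩
      subst hieq
      have hqm : q < m := by omega
      obtain ⟨hA0, hA1, hA2⟩ := A_block m q hqm
      obtain ⟨b0, b1, b2⟩ := blocks q hqm
      interval_cases r
      · calc x (n + (2+3*q+0)) = x (n+2+3*q) := by congr 1; omega
          _ = 0 := b0
          _ = A m (2+3*q+0) := by rw [show 2+3*q+0 = 2+3*q by omega, hA0]
      · calc x (n + (2+3*q+1)) = x (n+3+3*q) := by congr 1; omega
          _ = 1 := b1
          _ = A m (2+3*q+1) := by rw [show 2+3*q+1 = 3+3*q by omega, hA1]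
      · calc x (n + (2+3*q+2)) = x (n+4+3*q) := by congr 1; omega
          _ = 1 := b2
          _ = A m (2+3*q+2) := by rw [show 2+3*q+2 = 4+3*q by omega, hA2]
  -- hence shift^[n] x = A m, contradicting strictness of the lower bound
  have heq : shift^[n] x = A m := by
    funext i
    rw [hs]
    obtain ⟨q, r, hrp, hieq⟩ : ∃ q r, r < 3*m+2 ∧ i = r + (3*m+2)*q :=
      ⟨i/(3*m+2), i%(3*m+2), Nat.mod_lt _ (by omega),
        by have := Nat.div_add_mod i (3*m+2); omega⟩
    subst hieq
    rw [A_per' m q r]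
    rw [show n + (r + (3*m+2)*q) = (n+r) + (3*m+2)*q by ring, hperiod' q (n+r)]
    exact agree r hrp
  obtain ⟨k, _, hlt⟩ := hlow n
  rw [heq] at hlt
  omega
end
end

section
/- For the tribonacci number β, the values S_β(3m+2) = (1+β−β^{3m+1}−β^{3m+3})/((1−β^3)(β^{3m+2}−1)) form a strictly increasing sequence in m converging to (β^2+1)/(β^4−β) as m → ∞. -/
open Function Filter

noncomputable section

theorem stmt18 (β : ℝ) (hβ1 : β ^ 3 = β ^ 2 + β + 1) (hβ2 : 1 < β) (hβ3 : β < 2) :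
    (∀ m : ℕ,
      (1 + β - β ^ (3 * m + 1) - β ^ (3 * m + 3)) / ((1 - β ^ 3) * (β ^ (3 * m + 2) - 1)) <
      (1 + β - β ^ (3 * (m + 1) + 1) - β ^ (3 * (m + 1) + 3)) /
        ((1 - β ^ 3) * (β ^ (3 * (m + 1) + 2) - 1))) ∧
    Filter.Tendsto
      (fun m : ℕ => (1 + β - β ^ (3 * m + 1) - β ^ (3 * m + 3)) /
        ((1 - β ^ 3) * (β ^ (3 * m + 2) - 1)))
      Filter.atTop (nhds ((β ^ 2 + 1) / (β ^ 4 - β))) := by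
  have hb0 : (0:ℝ) < β := lt_trans zero_lt_one hβ2
  have h3 : (1:ℝ) < β ^ 3 := one_lt_pow₀ hβ2 (by norm_num)
  have h3ne : β ^ 3 - 1 > 0 := by linarith
  have hbne : β ≠ 0 := ne_of_gt hb0
  set L : ℝ := (β ^ 2 + 1) / (β ^ 4 - β) with hL
  set c : ℝ := (β - 1) / (β * (β ^ 3 - 1)) with hc
  have hcpos : 0 < c := div_pos (by linarith) (by positivity)
  have hy : ∀ m : ℕ, 0 < β ^ (3 * m + 2) - 1 := by
    intro m
    have := one_lt_pow₀ hβ2 (show 3 * m + 2 ≠ 0 by omega)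
    linarith
  have key : ∀ m : ℕ,
      (1 + β - β ^ (3 * m + 1) - β ^ (3 * m + 3)) / ((1 - β ^ 3) * (β ^ (3 * m + 2) - 1))
        = L - c / (β ^ (3 * m + 2) - 1) := by
    intro m
    have h1 : (1 - β ^ 3) ≠ 0 := by linarith
    have h2 : (β ^ (3 * m + 2) - 1) ≠ 0 := ne_of_gt (hy m)
    have h4 : β ^ 4 - β ≠ 0 := by
      have : β ^ 4 - β = β * (β ^ 3 - 1) := by ring
      rw [this]; positivity
    have h5 : β * (β ^ 3 - 1) ≠ 0 := by positivity
    rw [hL, hc]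
    field_simp
    ring
  constructor
  · intro m
    rw [key m, key (m + 1)]
    have h1 : β ^ (3 * m + 2) < β ^ (3 * (m + 1) + 2) :=
      pow_lt_pow_right₀ hβ2 (by omega)
    have := hy m
    have := hy (m + 1)
    have : c / (β ^ (3 * (m + 1) + 2) - 1) < c / (β ^ (3 * m + 2) - 1) :=
      div_lt_div_of_pos_left hcpos (hy m) (by linarith)
    linarith
  · have htop : Tendsto (fun m : ℕ => β ^ (3 * m + 2) - 1) atTop atTop := by
      apply tendsto_atTop_add_const_right
      have h1 : Tendsto (fun m : ℕ => (β ^ 3) ^ m) atTop atTop :=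
        tendsto_pow_atTop_atTop_of_one_lt h3
      have := h1.atTop_mul_const (show (0:ℝ) < β ^ 2 by positivity)
      convert this using 2 with m
      rw [pow_add, pow_mul]
    have hlim : Tendsto (fun m : ℕ => L - c / (β ^ (3 * m + 2) - 1)) atTop (nhds L) := by
      have := (tendsto_const_nhds (x := c)).div_atTop htop
      have h := (tendsto_const_nhds (x := L) (f := atTop (α := ℕ))).sub this
      simpa using h
    refine hlim.congr fun m => (key m).symm
end
end

section
/- For the tribonacci number β, S_β(p) → (β^2+1)/(β^4−β) as p → ∞, where S_β(p) is given by the explicit periodic-expansion formulas along each residue class of p modulo 3. -/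
open Function Filter

noncomputable section

section Val

variable {β : ℝ}

lemma beta_pos (hβ2 : 1 < β) : (0:ℝ) < β := lt_trans one_pos hβ2

lemma summable_aux (hβ2 : 1 < β) : Summable (fun i : ℕ => (1/β : ℝ) ^ (i+1)) := by
  have hb := beta_pos hβ2
  have : Summable (fun i : ℕ => (1/β : ℝ) * (1/β) ^ i) :=
    (summable_geometric_of_lt_one (by positivity) (by rw [div_lt_iff₀ hb]; linarith)).mul_left _
  simpa [pow_succ, mul_comm] using this

lemma tsum_aux (hβ2 : 1 < β) : ∑' i : ℕ, (1/β : ℝ) ^ (i+1) = 1 / (β - 1) := by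
  have hb := beta_pos hβ2
  have h1 : (1/β : ℝ) < 1 := by rw [div_lt_iff₀ hb]; linarith
  calc ∑' i : ℕ, (1/β : ℝ) ^ (i+1) = ∑' i : ℕ, (1/β) * (1/β) ^ i := by
        apply tsum_congr; intro i; rw [pow_succ, mul_comm]
    _ = (1/β) * (1 - 1/β)⁻¹ := by rw [tsum_mul_left, tsum_geometric_of_lt_one (by positivity) h1]
    _ = 1 / (β - 1) := by
        have h3 : (1 - 1/β) = (β-1)/β := by field_simp
        rw [h3, inv_div, div_mul_div_comm, one_mul]
        rw [div_eq_div_iff (by nlinarith) (by linarith)]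
        ring

lemma digit_le (hβ2 : 1 < β) (u : ℕ → ℕ) (hu : ∀ i, u i ≤ 1) (i : ℕ) :
    (u i : ℝ) / β ^ (i+1) ≤ (1/β) ^ (i+1) := by
  have hb := beta_pos hβ2
  have h1 : (u i : ℝ) ≤ 1 := by exact_mod_cast hu i
  rw [div_pow, one_pow]
  gcongr

lemma val_summable (hβ2 : 1 < β) (u : ℕ → ℕ) (hu : ∀ i, u i ≤ 1) :
    Summable (fun i => (u i : ℝ) / β ^ (i + 1)) := by
  have hb := beta_pos hβ2
  exact Summable.of_nonneg_of_le (fun i => by positivity) (digit_le hβ2 u hu) (summable_aux hβ2)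

lemma val_nonneg (hβ2 : 1 < β) (u : ℕ → ℕ) : 0 ≤ val β u := by
  have hb := beta_pos hβ2
  exact tsum_nonneg (fun i => by positivity)

lemma val_le_max (hβ2 : 1 < β) (u : ℕ → ℕ) (hu : ∀ i, u i ≤ 1) : val β u ≤ 1 / (β - 1) := by
  rw [← tsum_aux hβ2]
  exact Summable.tsum_le_tsum (digit_le hβ2 u hu) (val_summable hβ2 u hu) (summable_aux hβ2)

lemma val_step (hβ2 : 1 < β) (u : ℕ → ℕ) (hu : ∀ i, u i ≤ 1) :
    val β u = (u 0 : ℝ) / β + val β (shift u) / β := by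
  have hb := beta_pos hβ2
  have hs := val_summable hβ2 u hu
  rw [val, Summable.tsum_eq_zero_add hs]
  congr 1
  · norm_num
  · rw [val, ← tsum_div_const]
    apply tsum_congr; intro i
    show (u (i+1) : ℝ) / β ^ (i + 1 + 1) = (u (i+1) : ℝ) / β ^ (i+1) / β
    rw [div_div, ← pow_succ]

end Val

section Vals

variable {β : ℝ}

/-- value of the tail of `u` starting at position `k` -/
noncomputable def vals (β : ℝ) (u : ℕ → ℕ) (k : ℕ) : ℝ := val β (fun i => u (k + i))

lemma vals_zero (u : ℕ → ℕ) : vals β u 0 = val β u := by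
  unfold vals; congr 1; funext i; simp

lemma vals_nonneg (hβ2 : 1 < β) (u : ℕ → ℕ) (k : ℕ) : 0 ≤ vals β u k :=
  val_nonneg hβ2 _

lemma vals_le_max (hβ2 : 1 < β) (u : ℕ → ℕ) (hu : ∀ i, u i ≤ 1) (k : ℕ) :
    vals β u k ≤ 1 / (β - 1) :=
  val_le_max hβ2 _ (fun i => hu _)

lemma vals_step (hβ2 : 1 < β) (u : ℕ → ℕ) (hu : ∀ i, u i ≤ 1) (k : ℕ) :
    vals β u k = (u k : ℝ) / β + vals β u (k+1) / β := by
  have e1 : shift (fun i => u (k + i)) = fun i => u ((k+1) + i) := by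
    funext i; show u (k + (i+1)) = u ((k+1) + i); congr 1; omega
  have h := val_step hβ2 (fun i => u (k + i)) (fun i => hu _)
  rw [e1] at h
  exact h

lemma vals_step3 (hβ2 : 1 < β) (u : ℕ → ℕ) (hu : ∀ i, u i ≤ 1) (k : ℕ) :
    vals β u k = (u k : ℝ) / β + (u (k+1) : ℝ) / β^2 + (u (k+2) : ℝ) / β^3
      + vals β u (k+3) / β^3 := by
  have hb := beta_pos hβ2
  rw [vals_step hβ2 u hu k, vals_step hβ2 u hu (k+1), vals_step hβ2 u hu (k+2)]
  have h1 : k+1+1 = k+2 := by omega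
  have h2 : k+2+1 = k+3 := by omega
  rw [h1, h2]
  field_simp
  ring

end Vals

section Tails

variable {β : ℝ}

lemma vals_mul (hβ2 : 1 < β) (u : ℕ → ℕ) (hu : ∀ i, u i ≤ 1) (k : ℕ) :
    β * vals β u k = (u k : ℝ) + vals β u (k+1) := by
  have hb := beta_pos hβ2
  rw [vals_step hβ2 u hu k]
  field_simp

/-- The auxiliary upper bound for tails not starting with two 1's. -/
noncomputable def Vb (β : ℝ) : ℝ := (β^2 - β + 1)/(β^2*(β-1))

lemma Vb_lt_one (hβ1 : β ^ 3 = β ^ 2 + β + 1) (hβ2 : 1 < β) (hβ3 : β < 2) : Vb β < 1 := by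
  have hb := beta_pos hβ2
  rw [Vb, div_lt_one (mul_pos (by positivity) (by linarith))]
  nlinarith [hβ1]

lemma vals_le_V (hβ2 : 1 < β) (u : ℕ → ℕ) (hu : ∀ i, u i ≤ 1) (k : ℕ)
    (h : ¬(u k = 1 ∧ u (k+1) = 1)) : vals β u k ≤ Vb β := by
  have hb := beta_pos hβ2
  have hb1 : (0:ℝ) < β - 1 := by linarith
  have hak := vals_mul hβ2 u hu k
  have hab := vals_mul hβ2 u hu (k+1)
  have hk2 : k + 1 + 1 = k + 2 := by omega
  rw [hk2] at hab
  set a := vals β u (k+1) with ha_def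
  set b := vals β u (k+2) with hb_def
  have ha1 : a * (β - 1) ≤ 1 := by
    have := vals_le_max hβ2 u hu (k+1)
    rw [← ha_def] at this
    calc a * (β-1) ≤ (1/(β-1)) * (β-1) := by
          apply mul_le_mul_of_nonneg_right this (le_of_lt hb1)
      _ = 1 := by field_simp
  have hb1' : b * (β - 1) ≤ 1 := by
    have := vals_le_max hβ2 u hu (k+2)
    rw [← hb_def] at this
    calc b * (β-1) ≤ (1/(β-1)) * (β-1) := by
          apply mul_le_mul_of_nonneg_right this (le_of_lt hb1)
      _ = 1 := by field_simp
  have ha0 : 0 ≤ a := vals_nonneg hβ2 u (k+1)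
  have hb0 : 0 ≤ b := vals_nonneg hβ2 u (k+2)
  rw [Vb, le_div_iff₀ (mul_pos (by positivity : (0:ℝ) < β^2) (by linarith : (0:ℝ) < β - 1))]
  rcases Nat.le_one_iff_eq_zero_or_eq_one.mp (hu k) with h0 | h1
  · -- u k = 0 : β * vals k = a
    rw [h0] at hak; push_cast at hak
    have hv : vals β u k = a / β := by
      rw [eq_div_iff (ne_of_gt hb)]; linarith
    calc vals β u k * (β^2*(β-1)) = (a*(β-1))*β := by rw [hv]; field_simp
      _ ≤ 1*β := mul_le_mul_of_nonneg_right ha1 (le_of_lt hb)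
      _ ≤ β^2 - β + 1 := by nlinarith [sq_nonneg (β-1)]
  · -- u k = 1, hence u (k+1) = 0
    have h10 : u (k+1) = 0 := by
      rcases Nat.le_one_iff_eq_zero_or_eq_one.mp (hu (k+1)) with h' | h'
      · exact h'
      · exact absurd ⟨h1, h'⟩ h
    rw [h1] at hak; rw [h10] at hab; push_cast at hak hab
    have hv : vals β u k = (β + b) / β^2 := by
      rw [eq_div_iff (by positivity)]
      nlinarith
    calc vals β u k * (β^2*(β-1)) = β*(β-1) + b*(β-1) := by rw [hv]; field_simp
      _ ≤ β*(β-1) + 1 := by linarith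
      _ = β^2 - β + 1 := by ring

lemma vals_le_geo (hβ1 : β ^ 3 = β ^ 2 + β + 1) (hβ2 : 1 < β)
    (u : ℕ → ℕ) (hu : ∀ i, u i ≤ 1) :
    ∀ j k, (∀ r < j, u (k+3*r) = 1 ∧ u (k+3*r+1) = 1 ∧ u (k+3*r+2) = 0) →
      ¬(u (k+3*j) = 1 ∧ u (k+3*j+1) = 1) →
      vals β u k ≤ 1 - (1 - Vb β)/β^(3*j) := by
  have hb := beta_pos hβ2
  intro j
  induction j with
  | zero =>
      intro k _ hnot
      have h := vals_le_V hβ2 u hu k (by simpa using hnot)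
      simpa using h
  | succ j ih =>
      intro k h hnot
      have t0 := h 0 (by omega)
      have e0 : k + 3*0 = k := by omega
      have e1 : k + 3*0 + 1 = k + 1 := by omega
      have e2 : k + 3*0 + 2 = k + 2 := by omega
      rw [e0, e1, e2] at t0
      have ih' : vals β u (k+3) ≤ 1 - (1 - Vb β)/β^(3*j) := by
        apply ih
        · intro r hr
          have := h (r+1) (by omega)
          constructor
          · have e : k + 3*(r+1) = k + 3 + 3*r := by ring
            rw [e] at this; exact this.1
          constructor
          · have e : k + 3*(r+1) + 1 = k + 3 + 3*r + 1 := by ring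
            rw [e] at this; exact this.2.1
          · have e : k + 3*(r+1) + 2 = k + 3 + 3*r + 2 := by ring
            rw [e] at this; exact this.2.2
        · have e : k + 3*(j+1) = k + 3 + 3*j := by ring
          rw [e] at hnot; exact hnot
      have hstep := vals_step3 hβ2 u hu k
      rw [t0.1, t0.2.1, t0.2.2] at hstep
      push_cast at hstep
      have hβ1' : β^3 - β^2 - β - 1 = 0 := by linarith
      have hgeo : (1:ℝ)/β + 1/β^2 + 0/β^3 = 1 - 1/β^3 := by
        field_simp
        linear_combination (-1) * hβ1'
      rw [hgeo] at hstep
      have epow : β^(3*(j+1)) = β^(3*j) * β^3 := by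
        rw [show 3*(j+1) = 3*j+3 from by ring, pow_add]
      have hp3 : (0:ℝ) < β^3 := by positivity
      have hpj : (0:ℝ) < β^(3*j) := by positivity
      calc vals β u k = 1 - 1/β^3 + vals β u (k+3)/β^3 := hstep
        _ ≤ 1 - 1/β^3 + (1 - (1 - Vb β)/β^(3*j))/β^3 := by gcongr
        _ = 1 - (1 - Vb β)/β^(3*(j+1)) := by
            rw [epow]; field_simp; ring

lemma vals_lt_one (hβ1 : β ^ 3 = β ^ 2 + β + 1) (hβ2 : 1 < β) (hβ3 : β < 2)
    (u : ℕ → ℕ) (hu : ∀ i, u i ≤ 1) (p : ℕ) (hp : 0 < p)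
    (hper : ∀ i, u (i + p) = u i)
    (h111 : ∀ i, ¬(u i = 1 ∧ u (i+1) = 1 ∧ u (i+2) = 1))
    (hmark : ∃ i, u i = 0 ∧ u (i+2) = 0) :
    ∀ k, vals β u k < 1 := by
  have hb := beta_pos hβ2
  intro k
  have hperm : ∀ m i, u (i + m*p) = u i := by
    intro m
    induction m with
    | zero => intro i; simp
    | succ m ih =>
        intro i
        have e : i + (m+1)*p = (i + m*p) + p := by ring
        rw [e, hper, ih]
  have hex : ∃ j, ¬(u (k+3*j) = 1 ∧ u (k+3*j+1) = 1) := by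
    by_contra hno
    push_neg at hno
    obtain ⟨i₀, hi0, hi2⟩ := hmark
    set i := i₀ + k*p with hi_def
    have hkp : k ≤ k * p := Nat.le_mul_of_pos_right k hp
    have hik : k ≤ i := by omega
    have hu_i : u i = 0 := by rw [hi_def, hperm k i₀, hi0]
    have hu_i2 : u (i+2) = 0 := by
      have e : i + 2 = (i₀ + 2) + k*p := by omega
      rw [e, hperm k (i₀+2), hi2]
    obtain ⟨q, r, hr3, hd⟩ : ∃ q r, r < 3 ∧ i = k + 3*q + r :=
      ⟨(i-k)/3, (i-k)%3, by omega, by omega⟩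
    interval_cases r
    · have := (hno q).1
      rw [show k + 3*q = i by omega] at this
      omega
    · have := (hno q).2
      rw [show k + 3*q + 1 = i by omega] at this
      omega
    · have := (hno (q+1)).2
      rw [show k + 3*(q+1) + 1 = i + 2 by omega] at this
      omega
  set j₀ := Nat.find hex with hj₀_def
  have hj₀ := Nat.find_spec hex
  have hmin : ∀ r < j₀, u (k+3*r) = 1 ∧ u (k+3*r+1) = 1 ∧ u (k+3*r+2) = 0 := by
    intro r hr
    have h2 := Nat.find_min hex hr
    simp only [not_not] at h2
    refine ⟨h2.1, h2.2, ?_⟩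
    have h3 := h111 (k+3*r)
    have h4 := hu (k+3*r+2)
    rw [show k+3*r+1+1 = k+3*r+2 by omega] at h3
    by_contra hcon
    exact h3 ⟨h2.1, h2.2, by omega⟩
  have := vals_le_geo hβ1 hβ2 u hu j₀ k hmin hj₀
  have hVlt := Vb_lt_one hβ1 hβ2 hβ3
  have hpj : (0:ℝ) < β^(3*j₀) := by positivity
  have : (0:ℝ) < (1 - Vb β)/β^(3*j₀) := div_pos (by linarith) hpj
  linarith

lemma run_ge (hβ1 : β ^ 3 = β ^ 2 + β + 1) (hβ2 : 1 < β)
    (u : ℕ → ℕ) (hu : ∀ i, u i ≤ 1) :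
    ∀ N k, (∀ r < N, u (k+3*r) = 0 ∧ u (k+3*r+1) = 1 ∧ u (k+3*r+2) = 1) →
      (1 - 1/β^(3*N))/β ≤ vals β u k := by
  have hb := beta_pos hβ2
  intro N
  induction N with
  | zero =>
      intro k _
      have h0 : (1 - 1/β^(3*0))/β = 0 := by norm_num
      rw [h0]
      exact vals_nonneg hβ2 u k
  | succ N ih =>
      intro k h
      have t0 := h 0 (by omega)
      have e0 : k + 3*0 = k := by omega
      have e1 : k + 3*0 + 1 = k + 1 := by omega
      have e2 : k + 3*0 + 2 = k + 2 := by omega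
      rw [e0, e1, e2] at t0
      have ih' : (1 - 1/β^(3*N))/β ≤ vals β u (k+3) := by
        apply ih
        intro r hr
        have := h (r+1) (by omega)
        refine ⟨?_, ?_, ?_⟩
        · have e : k + 3*(r+1) = k + 3 + 3*r := by ring
          rw [e] at this; exact this.1
        · have e : k + 3*(r+1) + 1 = k + 3 + 3*r + 1 := by ring
          rw [e] at this; exact this.2.1
        · have e : k + 3*(r+1) + 2 = k + 3 + 3*r + 2 := by ring
          rw [e] at this; exact this.2.2
      have hstep := vals_step3 hβ2 u hu k
      rw [t0.1, t0.2.1, t0.2.2] at hstep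
      push_cast at hstep
      have epow : β^(3*(N+1)) = β^(3*N) * β^3 := by
        rw [show 3*(N+1) = 3*N+3 from by ring, pow_add]
      have hp3 : (0:ℝ) < β^3 := by positivity
      have hpN : (0:ℝ) < β^(3*N) := by positivity
      have hβ1' : β^3 - β^2 - β - 1 = 0 := by linarith
      calc (1 - 1/β^(3*(N+1)))/β
          = 0/β + 1/β^2 + 1/β^3 + ((1 - 1/β^(3*N))/β)/β^3 := by
            rw [epow]; field_simp
            linear_combination β^(3*N) * hβ1'
        _ ≤ 0/β + 1/β^2 + 1/β^3 + vals β u (k+3)/β^3 := by gcongr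
        _ = vals β u k := hstep.symm

end Tails

section Lower

variable {β : ℝ}

lemma vals_ge_L (hβ1 : β ^ 3 = β ^ 2 + β + 1) (hβ2 : 1 < β)
    (u : ℕ → ℕ) (hu : ∀ i, u i ≤ 1) (N : ℕ)
    (h00 : ∀ i, ¬(u i = 0 ∧ u (i+1) = 0))
    (hrun : ∀ i, u i = 0 → u (i+2) = 0 →
      ∀ r < N, u (i+2+3*r) = 0 ∧ u (i+2+3*r+1) = 1 ∧ u (i+2+3*r+2) = 1) :
    ∀ k, (β+1)/β^3 - 1/β^(3*N) ≤ vals β u k := by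
  have hb := beta_pos hβ2
  have hx : (0:ℝ) < 1/β^(3*N) := by positivity
  intro k
  have hak := vals_mul hβ2 u hu k
  have hab := vals_mul hβ2 u hu (k+1)
  have hbc := vals_mul hβ2 u hu (k+2)
  rw [show k+1+1 = k+2 from by omega] at hab
  rw [show k+2+1 = k+3 from by omega] at hbc
  have ha0 : 0 ≤ vals β u (k+1) := vals_nonneg hβ2 u (k+1)
  have hb0 : 0 ≤ vals β u (k+2) := vals_nonneg hβ2 u (k+2)
  have hc0 : 0 ≤ vals β u (k+3) := vals_nonneg hβ2 u (k+3)
  rcases Nat.le_one_iff_eq_zero_or_eq_one.mp (hu k) with h0 | h1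
  · -- u k = 0
    have h01 : u (k+1) = 1 := by
      have := h00 k; have := hu (k+1); omega
    rw [h0] at hak; rw [h01] at hab; push_cast at hak hab
    rcases Nat.le_one_iff_eq_zero_or_eq_one.mp (hu (k+2)) with h2 | h2
    · -- u (k+2) = 0 : use the run
      have hrunk := hrun k h0 h2
      have hb_ge := run_ge hβ1 hβ2 u hu N (k+2) hrunk
      have e1 : β^3 * vals β u k = β^2 * vals β u (k+1) := by
        linear_combination β^2 * hak
      have e2 : β^2 * vals β u (k+1) = β * (1 + vals β u (k+2)) := by
        linear_combination β * hab
      have e3 : 1 - 1/β^(3*N) ≤ β * vals β u (k+2) := by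
        have := (div_le_iff₀ hb).mp hb_ge
        linarith [this]
      have hb3 : (0:ℝ) < β^3 := by positivity
      have e4 : (1/β^(3*N)) ≤ (1/β^(3*N)) * β^3 := by
        nlinarith [hx, hb3]
      rw [sub_le_iff_le_add, div_le_iff₀ hb3]
      nlinarith [e1, e2, e3, e4]
    · -- u (k+2) = 1
      rw [h2] at hbc; push_cast at hbc
      have e1 : β^3 * vals β u k = β^2 * vals β u (k+1) := by
        linear_combination β^2 * hak
      have e2 : β^2 * vals β u (k+1) = β * (1 + vals β u (k+2)) := by
        linear_combination β * hab
      have e3 : 1 ≤ β * vals β u (k+2) := by linarith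
      have hb3 : (0:ℝ) < β^3 := by positivity
      have : (β+1)/β^3 ≤ vals β u k := by
        rw [div_le_iff₀ hb3]
        nlinarith [e1, e2, e3]
      linarith
  · -- u k = 1
    rw [h1] at hak; push_cast at hak
    have h2 : (β+1)/β^3 ≤ 1/β := by
      rw [div_le_div_iff₀ (by positivity) hb]
      nlinarith
    have h3 : 1/β ≤ vals β u k := by
      rw [div_le_iff₀ hb]
      nlinarith [hak, ha0]
    linarith

lemma orbit_eq (hβ2 : 1 < β) (u : ℕ → ℕ) (hu : ∀ i, u i ≤ 1)
    (hlt1 : ∀ k, vals β u k < 1) :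
    ∀ n, (Tmap β)^[n] (vals β u 0) = vals β u n := by
  intro n
  induction n with
  | zero => rfl
  | succ n ih =>
      rw [Function.iterate_succ_apply', ih]
      show Int.fract (β * vals β u n) = vals β u (n+1)
      rw [vals_mul hβ2 u hu n]
      have e : ((u n : ℝ) + vals β u (n+1)) = ((u n : ℤ) : ℝ) + vals β u (n+1) := by
        push_cast; ring
      rw [e, Int.fract_intCast_add,
        Int.fract_eq_self.mpr ⟨vals_nonneg hβ2 u (n+1), hlt1 (n+1)⟩]

lemma S_ge (hβ1 : β ^ 3 = β ^ 2 + β + 1) (hβ2 : 1 < β) (hβ3 : β < 2)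
    (u : ℕ → ℕ) (hu : ∀ i, u i ≤ 1) (p N : ℕ) (hp : 0 < p) (hN : 1 ≤ N)
    (hper : ∀ i, u (i + p) = u i)
    (h00 : ∀ i, ¬(u i = 0 ∧ u (i+1) = 0))
    (h111 : ∀ i, ¬(u i = 1 ∧ u (i+1) = 1 ∧ u (i+2) = 1))
    (hmark : ∃ i, u i = 0 ∧ u (i+2) = 0)
    (hrun : ∀ i, u i = 0 → u (i+2) = 0 →
      ∀ r < N, u (i+2+3*r) = 0 ∧ u (i+2+3*r+1) = 1 ∧ u (i+2+3*r+2) = 1)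
    (hprim : ∀ q, 0 < q → q < p → (∀ n, u (n+q) = u n) → False) :
    (β+1)/β^3 - 1/β^(3*N) ≤ S β p := by
  have hb := beta_pos hβ2
  set t := (β+1)/β^3 - 1/β^(3*N) with ht_def
  set x := vals β u 0 with hx_def
  have hlt1 := vals_lt_one hβ1 hβ2 hβ3 u hu p hp hper h111 hmark
  have hge := vals_ge_L hβ1 hβ2 u hu N h00 hrun
  have horb := orbit_eq hβ2 u hu hlt1
  have hx : (0:ℝ) < 1/β^(3*N) := by positivity
  have ht0 : 0 ≤ t := by
    have h1 : β^3 ≤ β^(3*N) := pow_le_pow_right₀ (le_of_lt hβ2) (by omega)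
    have h2 : 1/β^(3*N) ≤ 1/β^3 :=
      one_div_le_one_div_of_le (by positivity) h1
    have h3 : (β+1)/β^3 - 1/β^3 = β/β^3 := by ring
    have h4 : (0:ℝ) ≤ β/β^3 := by positivity
    rw [ht_def]
    linarith
  have ht1 : t < 1 := by
    have hL1 : (β+1)/β^3 < 1 := by
      rw [div_lt_one (by positivity)]
      nlinarith
    rw [ht_def]; linarith
  have hKx : x ∈ K β t := by
    refine ⟨⟨vals_nonneg hβ2 u 0, hlt1 0⟩, fun n => ?_⟩
    rw [horb n]; exact hge n
  have hTp : Function.IsPeriodicPt (Tmap β) p x := by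
    show (Tmap β)^[p] x = x
    rw [horb p]
    show vals β u p = vals β u 0
    unfold vals; congr 1; funext i
    show u (p + i) = u (0 + i)
    rw [Nat.add_comm p i, hper i, Nat.zero_add]
  have hq0 : 0 < Function.minimalPeriod (Tmap β) x :=
    Function.IsPeriodicPt.minimalPeriod_pos hp hTp
  have hdvd := hTp.minimalPeriod_dvd
  set q := Function.minimalPeriod (Tmap β) x with hq_def
  have hqp : q = p := by
    by_contra hne
    have hqlt : q < p := lt_of_le_of_ne (Nat.le_of_dvd hp hdvd) hne
    apply hprim q hq0 hqlt
    have hTq : (Tmap β)^[q] x = x := Function.isPeriodicPt_minimalPeriod (Tmap β) x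
    have hvq : ∀ m, vals β u (m+q) = vals β u m := by
      intro m
      calc vals β u (m+q) = (Tmap β)^[m+q] (vals β u 0) := (horb (m+q)).symm
        _ = (Tmap β)^[m] ((Tmap β)^[q] (vals β u 0)) :=
            Function.iterate_add_apply _ m q _
        _ = (Tmap β)^[m] (vals β u 0) := by rw [hTq]
        _ = vals β u m := horb m
    intro n
    have hmuln := vals_mul hβ2 u hu n
    have hmulq := vals_mul hβ2 u hu (n+q)
    rw [hvq n, show n+q+1 = (n+1)+q from by omega, hvq (n+1)] at hmulq
    have : ((u (n+q) : ℝ)) = ((u n : ℝ)) := by linarith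
    exact_mod_cast this
  apply le_csSup
  · exact ⟨1, fun r hr => le_of_lt hr.1.2⟩
  · exact ⟨⟨ht0, ht1⟩, x, hKx, hqp⟩

end Lower

section Upper

variable {β : ℝ}

lemma S_le (hβ1 : β ^ 3 = β ^ 2 + β + 1) (hβ2 : 1 < β) (hβ3 : β < 2)
    (p : ℕ) (hp : 4 ≤ p) : S β p ≤ (β+1)/β^3 := by
  have hb := beta_pos hβ2
  apply Real.sSup_le _ (by positivity)
  rintro t ⟨⟨ht0, ht1⟩, x, ⟨⟨hx0, hx1⟩, hK⟩, hmin⟩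
  by_contra hgt
  push_neg at hgt
  set y : ℕ → ℝ := fun n => (Tmap β)^[n] x with hy_def
  have hstep : ∀ n, y (n+1) = Int.fract (β * y n) := by
    intro n
    show (Tmap β)^[n+1] x = Int.fract (β * (Tmap β)^[n] x)
    rw [Function.iterate_succ_apply']
    rfl
  have hy0 : ∀ n, 0 ≤ y n ∧ y n < 1 := by
    intro n
    cases n with
    | zero => exact ⟨hx0, hx1⟩
    | succ n => rw [hstep n]; exact ⟨Int.fract_nonneg _, Int.fract_lt_one _⟩
  have hyL : ∀ n, (β+1)/β^3 < y n := fun n => lt_of_lt_of_le hgt (hK n)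
  have hyL' : ∀ n, β + 1 < y n * β^3 := by
    intro n
    have := hyL n
    rwa [div_lt_iff₀ (by positivity)] at this
  have hdig0 : ∀ n, y n < 1/β → y (n+1) = β * y n := by
    intro n h
    have h1 : β * y n < 1 := by
      rw [lt_div_iff₀ hb] at h; linarith [h]
    rw [hstep n, Int.fract_eq_self.mpr ⟨by nlinarith [(hy0 n).1], h1⟩]
  have hdig1 : ∀ n, 1/β ≤ y n → y (n+1) = β * y n - 1 := by
    intro n h
    have h1 : 1 ≤ β * y n := by
      rw [div_le_iff₀ hb] at h; linarith [h]
    have h2 : β * y n - 1 < 1 := by nlinarith [(hy0 n).2]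
    rw [hstep n, show β * y n = ((1:ℤ):ℝ) + (β * y n - 1) from by push_cast; ring,
      Int.fract_intCast_add, Int.fract_eq_self.mpr ⟨by linarith, h2⟩]
    push_cast
    ring
  have h111 : ∀ n, 1/β ≤ y n → 1/β ≤ y (n+1) → y (n+2) < 1/β := by
    intro n h1 h2
    have e1 := hdig1 n h1
    have e2 := hdig1 (n+1) h2
    have hy1 := (hy0 n).2
    rw [e2, e1, lt_div_iff₀ hb]
    nlinarith [hy1]
  have hblock : ∀ n, y n < 1/β →
      1/β ≤ y (n+1) ∧ 1/β ≤ y (n+2) ∧ y (n+3) < 1/β := by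
    intro n h
    have hL' := hyL' n
    have e1 := hdig0 n h
    have d1 : 1/β ≤ y (n+1) := by
      rw [e1, div_le_iff₀ hb]
      nlinarith [hL', hb]
    have d2 : 1/β ≤ y (n+2) := by
      have e2 := hdig1 (n+1) d1
      rw [e2, e1, div_le_iff₀ hb]
      nlinarith [hL']
    exact ⟨d1, d2, h111 (n+1) d1 d2⟩
  obtain ⟨n₀, hn₀2, hy_n₀⟩ : ∃ n₀, n₀ ≤ 2 ∧ y n₀ < 1/β := by
    rcases lt_or_ge (y 0) (1/β) with h | h
    · exact ⟨0, by omega, h⟩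
    rcases lt_or_ge (y 1) (1/β) with h1 | h1
    · exact ⟨1, by omega, h1⟩
    · exact ⟨2, by omega, h111 0 h h1⟩
  have hpattern : ∀ j, y (n₀ + 3*j) < 1/β ∧ 1/β ≤ y (n₀+3*j+1) ∧ 1/β ≤ y (n₀+3*j+2) := by
    intro j
    induction j with
    | zero =>
        rw [show n₀ + 3*0 = n₀ from by omega, show n₀ + 3*0 + 1 = n₀ + 1 from by omega,
          show n₀ + 3*0 + 2 = n₀ + 2 from by omega]
        have := hblock n₀ hy_n₀
        exact ⟨hy_n₀, this.1, this.2.1⟩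
    | succ j ih =>
        have hA := (hblock (n₀ + 3*j) ih.1).2.2
        rw [show n₀ + 3*j + 3 = n₀ + 3*(j+1) from by omega] at hA
        have hB := hblock (n₀ + 3*(j+1)) hA
        exact ⟨hA, hB.1, hB.2.1⟩
  have hTp : (Tmap β)^[p] x = x := by
    have h := Function.isPeriodicPt_minimalPeriod (Tmap β) x
    rw [hmin] at h
    exact h
  have hyper : ∀ k, y (k + p) = y k := by
    intro k
    show (Tmap β)^[k+p] x = (Tmap β)^[k] x
    rw [Function.iterate_add_apply, hTp]
  have h3p : p % 3 = 0 := by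
    by_contra h3
    have h := hyper n₀
    obtain ⟨j, r, hr, e⟩ : ∃ j r, r < 3 ∧ p = 3*j + r := ⟨p/3, p%3, by omega, by omega⟩
    interval_cases r
    · omega
    · have := (hpattern j).2.1
      rw [show n₀ + 3*j + 1 = n₀ + p from by omega] at this
      rw [h] at this
      linarith [hy_n₀]
    · have := (hpattern j).2.2
      rw [show n₀ + 3*j + 2 = n₀ + p from by omega] at this
      rw [h] at this
      linarith [hy_n₀]
  have hdigeq : ∀ k, (y k < 1/β ↔ y (k+3) < 1/β) := by
    intro k
    have e1 : y k = y (k+p) := (hyper k).symm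
    have e2 : y (k+3) = y (k+3+p) := (hyper (k+3)).symm
    obtain ⟨j, r, hr, e⟩ : ∃ j r, r < 3 ∧ k + p = n₀ + 3*j + r :=
      ⟨(k+p-n₀)/3, (k+p-n₀)%3, by omega, by omega⟩
    have e3 : k + 3 + p = n₀ + 3*(j+1) + r := by omega
    interval_cases r
    · apply iff_of_true
      · rw [e1, show k+p = n₀+3*j from by omega]; exact (hpattern j).1
      · rw [e2, show k+3+p = n₀+3*(j+1) from by omega]; exact (hpattern (j+1)).1
    · apply iff_of_false
      · rw [e1, show k+p = n₀+3*j+1 from by omega]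
        exact not_lt.mpr (hpattern j).2.1
      · rw [e2, show k+3+p = n₀+3*(j+1)+1 from by omega]
        exact not_lt.mpr (hpattern (j+1)).2.1
    · apply iff_of_false
      · rw [e1, show k+p = n₀+3*j+2 from by omega]
        exact not_lt.mpr (hpattern j).2.2
      · rw [e2, show k+3+p = n₀+3*(j+1)+2 from by omega]
        exact not_lt.mpr (hpattern (j+1)).2.2
  have hcontr : ∀ k, |y 3 - y 0| * β^k = |y (k+3) - y k| := by
    intro k
    induction k with
    | zero => simp
    | succ k ih =>
        have hk := hdigeq k
        have e4 : k + 1 + 3 = (k+3) + 1 := by omega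
        rcases lt_or_ge (y k) (1/β) with h | h
        · have h' : y (k+3) < 1/β := hk.mp h
          rw [e4, hdig0 (k+3) h', hdig0 k h, pow_succ, ← mul_assoc, ih,
            show β * y (k+3) - β * y k = β * (y (k+3) - y k) from by ring,
            abs_mul, abs_of_pos hb]
          ring
        · have h' : 1/β ≤ y (k+3) := by
            rcases lt_or_ge (y (k+3)) (1/β) with hc | hc
            · exact absurd (hk.mpr hc) (not_lt.mpr h)
            · exact hc
          rw [e4, hdig1 (k+3) h', hdig1 k h, pow_succ, ← mul_assoc, ih,
            show (β * y (k+3) - 1) - (β * y k - 1) = β * (y (k+3) - y k) from by ring,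
            abs_mul, abs_of_pos hb]
          ring
  have hy30 : y 3 = y 0 := by
    by_contra hne
    have hd : 0 < |y 3 - y 0| := abs_pos.mpr (sub_ne_zero.mpr hne)
    obtain ⟨k, hk⟩ := pow_unbounded_of_one_lt (1/|y 3 - y 0|) hβ2
    have hbound : |y (k+3) - y k| < 1 := by
      have h1 := hy0 (k+3)
      have h2 := hy0 k
      rw [abs_lt]
      constructor <;> linarith [h1.1, h1.2, h2.1, h2.2]
    have hc := hcontr k
    rw [div_lt_iff₀ hd] at hk
    nlinarith [hc, hk, hbound]
  have hT3 : Function.IsPeriodicPt (Tmap β) 3 x := hy30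
  have hdvd := hT3.minimalPeriod_dvd
  rw [hmin] at hdvd
  have := Nat.le_of_dvd (by norm_num) hdvd
  omega

end Upper

section Construction

/-- offset within the current block -/
def offF (N k c i : ℕ) : ℕ :=
  if i % ((k-1)*(3*N+2) + (3*c+2)) < (k-1)*(3*N+2)
  then (i % ((k-1)*(3*N+2) + (3*c+2))) % (3*N+2)
  else i % ((k-1)*(3*N+2) + (3*c+2)) - (k-1)*(3*N+2)

/-- length of the current block -/
def lenF (N k c i : ℕ) : ℕ :=
  if i % ((k-1)*(3*N+2) + (3*c+2)) < (k-1)*(3*N+2)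
  then 3*N+2
  else 3*c+2

/-- the digit sequence: each block of length L=3a+2 carries the word 01(011)^a -/
def uF (N k c i : ℕ) : ℕ :=
  if offF N k c i = 0 ∨ (offF N k c i) % 3 = 2 then 0 else 1

lemma mod_succ {i P : ℕ} (h2 : 2 ≤ P) :
    (i+1) % P = if i % P + 1 = P then 0 else i % P + 1 := by
  have h1 : (1:ℕ) % P = 1 := Nat.mod_eq_of_lt (by omega)
  have hlt : i % P < P := Nat.mod_lt _ (by omega)
  rw [Nat.add_mod, h1]
  by_cases h : i % P + 1 = P
  · rw [if_pos h, h, Nat.mod_self]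
  · rw [if_neg h, Nat.mod_eq_of_lt (by omega)]

variable {N k c : ℕ}

lemma offF_reg1 {i : ℕ} (h : i % ((k-1)*(3*N+2) + (3*c+2)) < (k-1)*(3*N+2)) :
    offF N k c i = (i % ((k-1)*(3*N+2) + (3*c+2))) % (3*N+2) := by
  unfold offF; rw [if_pos h]

lemma offF_reg2 {i : ℕ} (h : ¬ i % ((k-1)*(3*N+2) + (3*c+2)) < (k-1)*(3*N+2)) :
    offF N k c i = i % ((k-1)*(3*N+2) + (3*c+2)) - (k-1)*(3*N+2) := by
  unfold offF; rw [if_neg h]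

lemma lenF_reg1 {i : ℕ} (h : i % ((k-1)*(3*N+2) + (3*c+2)) < (k-1)*(3*N+2)) :
    lenF N k c i = 3*N+2 := by
  unfold lenF; rw [if_pos h]

lemma lenF_reg2 {i : ℕ} (h : ¬ i % ((k-1)*(3*N+2) + (3*c+2)) < (k-1)*(3*N+2)) :
    lenF N k c i = 3*c+2 := by
  unfold lenF; rw [if_neg h]

lemma uF_zero_iff (i : ℕ) :
    uF N k c i = 0 ↔ (offF N k c i = 0 ∨ (offF N k c i) % 3 = 2) := by
  unfold uF
  by_cases h : offF N k c i = 0 ∨ (offF N k c i) % 3 = 2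
  · rw [if_pos h]; simp [h]
  · rw [if_neg h]; simp [h]

lemma uF_le_one (i : ℕ) : uF N k c i ≤ 1 := by
  unfold uF; split <;> omega

lemma off_lt_len (hN : 1 ≤ N) (i : ℕ) :
    offF N k c i < lenF N k c i ∧ (lenF N k c i = 3*N+2 ∨ lenF N k c i = 3*c+2) := by
  have hj : i % ((k-1)*(3*N+2) + (3*c+2)) < (k-1)*(3*N+2) + (3*c+2) :=
    Nat.mod_lt _ (by omega)
  by_cases h : i % ((k-1)*(3*N+2) + (3*c+2)) < (k-1)*(3*N+2)
  · rw [offF_reg1 h, lenF_reg1 h]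
    exact ⟨Nat.mod_lt _ (by omega), Or.inl rfl⟩
  · rw [offF_reg2 h, lenF_reg2 h]
    exact ⟨by omega, Or.inr rfl⟩

lemma len_facts (hN : 1 ≤ N) (hc : N < c) (i : ℕ) :
    3*N+2 ≤ lenF N k c i ∧ (lenF N k c i) % 3 = 2 := by
  rcases (off_lt_len (N := N) (k := k) (c := c) hN i).2 with h | h <;> rw [h] <;> omega

lemma step_lt (hN : 1 ≤ N) (i : ℕ) (h : offF N k c i + 1 < lenF N k c i) :
    offF N k c (i+1) = offF N k c i + 1 ∧ lenF N k c (i+1) = lenF N k c i := by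
  have hAH : ((k-1)*(3*N+2)) % (3*N+2) = 0 := Nat.mul_mod_left (k-1) (3*N+2)
  have hP2 : 2 ≤ (k-1)*(3*N+2) + (3*c+2) := by omega
  have hj : i % ((k-1)*(3*N+2) + (3*c+2)) < (k-1)*(3*N+2) + (3*c+2) :=
    Nat.mod_lt _ (by omega)
  have hms := mod_succ (i := i) hP2
  by_cases hreg : i % ((k-1)*(3*N+2) + (3*c+2)) < (k-1)*(3*N+2)
  · rw [offF_reg1 hreg, lenF_reg1 hreg] at h ⊢
    have hin : (i % ((k-1)*(3*N+2) + (3*c+2))) % (3*N+2) < 3*N+2 := Nat.mod_lt _ (by omega)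
    have hstep : (i % ((k-1)*(3*N+2) + (3*c+2)) + 1) % (3*N+2)
        = (i % ((k-1)*(3*N+2) + (3*c+2))) % (3*N+2) + 1 := by
      rw [mod_succ (by omega), if_neg (by omega)]
    have hiP : (i+1) % ((k-1)*(3*N+2) + (3*c+2))
        = i % ((k-1)*(3*N+2) + (3*c+2)) + 1 := by
      rw [hms, if_neg (by omega)]
    by_cases hbd : i % ((k-1)*(3*N+2) + (3*c+2)) + 1 < (k-1)*(3*N+2)
    · rw [offF_reg1 (by rw [hiP]; exact hbd), lenF_reg1 (by rw [hiP]; exact hbd), hiP, hstep]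
      exact ⟨rfl, rfl⟩
    · -- i % P + 1 = A : impossible since then (i%P+1)%H = 0 but also = (i%P)%H+1
      exfalso
      have hEq : i % ((k-1)*(3*N+2) + (3*c+2)) + 1 = (k-1)*(3*N+2) := by omega
      rw [hEq, hAH] at hstep
      omega
  · rw [offF_reg2 hreg, lenF_reg2 hreg] at h ⊢
    have hiP : (i+1) % ((k-1)*(3*N+2) + (3*c+2))
        = i % ((k-1)*(3*N+2) + (3*c+2)) + 1 := by
      rw [hms, if_neg (by omega)]
    have hreg' : ¬ (i+1) % ((k-1)*(3*N+2) + (3*c+2)) < (k-1)*(3*N+2) := by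
      rw [hiP]; omega
    rw [offF_reg2 hreg', lenF_reg2 hreg', hiP]
    exact ⟨by omega, rfl⟩

lemma step_eq (hN : 1 ≤ N) (i : ℕ) (h : offF N k c i + 1 = lenF N k c i) :
    offF N k c (i+1) = 0 := by
  have hAH : ((k-1)*(3*N+2)) % (3*N+2) = 0 := Nat.mul_mod_left (k-1) (3*N+2)
  have hP2 : 2 ≤ (k-1)*(3*N+2) + (3*c+2) := by omega
  have hj : i % ((k-1)*(3*N+2) + (3*c+2)) < (k-1)*(3*N+2) + (3*c+2) :=
    Nat.mod_lt _ (by omega)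
  have hms := mod_succ (i := i) hP2
  by_cases hreg : i % ((k-1)*(3*N+2) + (3*c+2)) < (k-1)*(3*N+2)
  · rw [offF_reg1 hreg, lenF_reg1 hreg] at h
    have hin : (i % ((k-1)*(3*N+2) + (3*c+2))) % (3*N+2) < 3*N+2 := Nat.mod_lt _ (by omega)
    have hstep : (i % ((k-1)*(3*N+2) + (3*c+2)) + 1) % (3*N+2) = 0 := by
      rw [mod_succ (by omega), if_pos (by omega)]
    have hiP : (i+1) % ((k-1)*(3*N+2) + (3*c+2))
        = i % ((k-1)*(3*N+2) + (3*c+2)) + 1 := by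
      rw [hms, if_neg (by omega)]
    by_cases hbd : i % ((k-1)*(3*N+2) + (3*c+2)) + 1 < (k-1)*(3*N+2)
    · rw [offF_reg1 (by rw [hiP]; exact hbd), hiP, hstep]
    · have hEq : i % ((k-1)*(3*N+2) + (3*c+2)) + 1 = (k-1)*(3*N+2) := by omega
      rw [offF_reg2 (by rw [hiP]; omega), hiP]
      omega
  · rw [offF_reg2 hreg, lenF_reg2 hreg] at h
    have hEq : i % ((k-1)*(3*N+2) + (3*c+2)) + 1 = (k-1)*(3*N+2) + (3*c+2) := by omega
    have hiP : (i+1) % ((k-1)*(3*N+2) + (3*c+2)) = 0 := by rw [hms, if_pos hEq]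
    by_cases h0 : (0:ℕ) < (k-1)*(3*N+2)
    · rw [offF_reg1 (by rw [hiP]; exact h0), hiP, Nat.zero_mod]
    · rw [offF_reg2 (by rw [hiP]; omega), hiP]
      omega

lemma off_per (i : ℕ) :
    offF N k c (i + ((k-1)*(3*N+2) + (3*c+2))) = offF N k c i ∧
    lenF N k c (i + ((k-1)*(3*N+2) + (3*c+2))) = lenF N k c i := by
  unfold offF lenF
  rw [Nat.add_mod_right]
  exact ⟨rfl, rfl⟩

lemma run_lemma (hN : 1 ≤ N) (i : ℕ) (h0 : offF N k c i = 0) :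
    ∀ d, d < lenF N k c i → offF N k c (i+d) = d ∧ lenF N k c (i+d) = lenF N k c i := by
  intro d
  induction d with
  | zero => intro _; exact ⟨h0, rfl⟩
  | succ d ih =>
      intro hd
      obtain ⟨ho, hl⟩ := ih (by omega)
      have := step_lt hN (i+d) (by rw [ho, hl]; omega)
      rw [ho, hl] at this
      exact this

end Construction

section ConstructionProps

variable {N k c : ℕ}

lemma uF_h00 (hN : 1 ≤ N) (hc : N < c) (i : ℕ) :
    ¬(uF N k c i = 0 ∧ uF N k c (i+1) = 0) := by
  rintro ⟨h0, h1⟩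
  have hz := (uF_zero_iff (N := N) (k := k) (c := c) i).mp h0
  have hol := off_lt_len (N := N) (k := k) (c := c) hN i
  have hlf := len_facts (N := N) (k := k) (c := c) hN hc i
  have hlt : offF N k c i + 1 < lenF N k c i := by omega
  obtain ⟨ho1, _⟩ := step_lt hN i hlt
  have hz1 := (uF_zero_iff (N := N) (k := k) (c := c) (i+1)).mp h1
  omega

lemma uF_h111 (hN : 1 ≤ N) (hc : N < c) (i : ℕ) :
    ¬(uF N k c i = 1 ∧ uF N k c (i+1) = 1 ∧ uF N k c (i+2) = 1) := by
  rintro ⟨h0, h1, h2⟩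
  have hz0 := uF_zero_iff (N := N) (k := k) (c := c) i
  have hz1 := uF_zero_iff (N := N) (k := k) (c := c) (i+1)
  have hz2 := uF_zero_iff (N := N) (k := k) (c := c) (i+2)
  have hl0 := uF_le_one (N := N) (k := k) (c := c) i
  have hl1 := uF_le_one (N := N) (k := k) (c := c) (i+1)
  have hl2 := uF_le_one (N := N) (k := k) (c := c) (i+2)
  have hol := off_lt_len (N := N) (k := k) (c := c) hN i
  have hlf := len_facts (N := N) (k := k) (c := c) hN hc i
  by_cases hb1 : offF N k c i + 1 < lenF N k c i
  · obtain ⟨ho1, hl1'⟩ := step_lt hN i hb1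
    by_cases hb2 : offF N k c (i+1) + 1 < lenF N k c (i+1)
    · obtain ⟨ho2, _⟩ := step_lt hN (i+1) hb2
      rw [show i+1+1 = i+2 by omega] at ho2
      omega
    · have hol1 := off_lt_len (N := N) (k := k) (c := c) hN (i+1)
      have ho2 := step_eq (N:=N) (k:=k) (c:=c) hN (i+1) (by omega)
      rw [show i+1+1 = i+2 by omega] at ho2
      omega
  · have ho1 := step_eq (N:=N) (k:=k) (c:=c) hN i (by omega)
    omega

lemma uF_marker_off (hN : 1 ≤ N) (hc : N < c) (i : ℕ)
    (h0 : uF N k c i = 0) (h2 : uF N k c (i+2) = 0) : offF N k c i = 0 := by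
  by_contra hne
  have hz := (uF_zero_iff (N := N) (k := k) (c := c) i).mp h0
  have hol := off_lt_len (N := N) (k := k) (c := c) hN i
  have hlf := len_facts (N := N) (k := k) (c := c) hN hc i
  have hb1 : offF N k c i + 1 < lenF N k c i := by omega
  obtain ⟨ho1, hl1⟩ := step_lt hN i hb1
  have hb2 : offF N k c (i+1) + 1 < lenF N k c (i+1) := by omega
  obtain ⟨ho2, _⟩ := step_lt hN (i+1) hb2
  rw [show i+1+1 = i+2 by omega] at ho2
  have hz2 := (uF_zero_iff (N := N) (k := k) (c := c) (i+2)).mp h2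
  omega

lemma uF_hrun (hN : 1 ≤ N) (hc : N < c) (i : ℕ)
    (h0 : uF N k c i = 0) (h2 : uF N k c (i+2) = 0) :
    ∀ r < N, uF N k c (i+2+3*r) = 0 ∧ uF N k c (i+2+3*r+1) = 1 ∧ uF N k c (i+2+3*r+2) = 1 := by
  intro r hr
  have hoff := uF_marker_off hN hc i h0 h2
  have hlf := len_facts (N := N) (k := k) (c := c) hN hc i
  have hrunl := run_lemma hN i hoff
  have hd1 := (hrunl (2+3*r) (by omega)).1
  have hd2 := (hrunl (3+3*r) (by omega)).1
  have hd3 := (hrunl (4+3*r) (by omega)).1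
  rw [show i+(2+3*r) = i+2+3*r by omega] at hd1
  rw [show i+(3+3*r) = i+2+3*r+1 by omega] at hd2
  rw [show i+(4+3*r) = i+2+3*r+2 by omega] at hd3
  refine ⟨?_, ?_, ?_⟩
  · have := uF_zero_iff (N := N) (k := k) (c := c) (i+2+3*r)
    omega
  · have := uF_zero_iff (N := N) (k := k) (c := c) (i+2+3*r+1)
    have := uF_le_one (N := N) (k := k) (c := c) (i+2+3*r+1)
    omega
  · have := uF_zero_iff (N := N) (k := k) (c := c) (i+2+3*r+2)
    have := uF_le_one (N := N) (k := k) (c := c) (i+2+3*r+2)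
    omega

lemma uF_per (i : ℕ) :
    uF N k c (i + ((k-1)*(3*N+2) + (3*c+2))) = uF N k c i := by
  unfold uF
  rw [(off_per (N := N) (k := k) (c := c) i).1]

lemma off_zero_start (hN : 1 ≤ N) (t : ℕ) (ht : t ≤ k-1) :
    offF N k c (t*(3*N+2)) = 0 := by
  have hle : t*(3*N+2) ≤ (k-1)*(3*N+2) := Nat.mul_le_mul ht (le_refl (3*N+2))
  have hlt : t*(3*N+2) < (k-1)*(3*N+2) + (3*c+2) := by omega
  have hmod : t*(3*N+2) % ((k-1)*(3*N+2) + (3*c+2)) = t*(3*N+2) := Nat.mod_eq_of_lt hlt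
  by_cases hreg : t*(3*N+2) % ((k-1)*(3*N+2) + (3*c+2)) < (k-1)*(3*N+2)
  · rw [offF_reg1 hreg, hmod, Nat.mul_mod_left]
  · rw [offF_reg2 hreg, hmod]
    rw [hmod] at hreg
    omega

lemma off_zero_char (i : ℕ) (h : offF N k c i = 0) :
    ∃ t, t ≤ k-1 ∧ i % ((k-1)*(3*N+2) + (3*c+2)) = t*(3*N+2) := by
  by_cases hreg : i % ((k-1)*(3*N+2) + (3*c+2)) < (k-1)*(3*N+2)
  · rw [offF_reg1 hreg] at h
    obtain ⟨t, ht⟩ := Nat.dvd_of_mod_eq_zero h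
    have h2 : (3*N+2)*t < (3*N+2)*(k-1) := by
      rw [← ht, Nat.mul_comm (3*N+2) (k-1)]
      exact hreg
    have h3 : t < k-1 := Nat.lt_of_mul_lt_mul_left h2
    exact ⟨t, by omega, by rw [ht, Nat.mul_comm]⟩
  · rw [offF_reg2 hreg] at h
    exact ⟨k-1, le_refl _, by omega⟩

lemma marker_of_off (hN : 1 ≤ N) (hc : N < c) (i : ℕ) (h : offF N k c i = 0) :
    uF N k c i = 0 ∧ uF N k c (i+2) = 0 := by
  have hlf := len_facts (N := N) (k := k) (c := c) hN hc i
  have h2 := (run_lemma (N:=N) (k:=k) (c:=c) hN i h 2 (by omega)).1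
  refine ⟨(uF_zero_iff i).mpr (Or.inl h), (uF_zero_iff (i+2)).mpr (Or.inr ?_)⟩
  omega

lemma uF_hprim (hN : 1 ≤ N) (hc : N < c) (hk1 : 1 ≤ k) (hk3 : k ≤ 3)
    (q : ℕ) (hq0 : 0 < q) (hqlt : q < (k-1)*(3*N+2) + (3*c+2))
    (heq : ∀ n, uF N k c (n+q) = uF N k c n) : False := by
  have hm0 : offF N k c 0 = 0 := by
    have := off_zero_start (N := N) (k := k) (c := c) hN 0 (by omega)
    rw [show 0*(3*N+2) = 0 by omega] at this
    exact this
  have hmark0 := marker_of_off hN hc 0 hm0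
  have hq_u : uF N k c q = 0 := by
    have h := heq 0
    rw [Nat.zero_add] at h
    rw [h]; exact hmark0.1
  have hq_u2 : uF N k c (q+2) = 0 := by
    have h := heq 2
    rw [show 2+q = q+2 by omega] at h
    rw [h]; exact hmark0.2
  have hoq : offF N k c q = 0 := uF_marker_off hN hc q hq_u hq_u2
  obtain ⟨t₀, ht₀, hqeq⟩ := off_zero_char q hoq
  rw [Nat.mod_eq_of_lt hqlt] at hqeq
  have hmA : offF N k c ((k-1)*(3*N+2)) = 0 := off_zero_start hN (k-1) le_rfl
  have hmarkA := marker_of_off hN hc _ hmA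
  have hv_u : uF N k c ((k-1)*(3*N+2) + q) = 0 := by
    rw [heq _]; exact hmarkA.1
  have hv_u2 : uF N k c ((k-1)*(3*N+2) + q + 2) = 0 := by
    have h := heq ((k-1)*(3*N+2) + 2)
    rw [show (k-1)*(3*N+2)+2+q = (k-1)*(3*N+2)+q+2 by omega] at h
    rw [h]; exact hmarkA.2
  have hov : offF N k c ((k-1)*(3*N+2) + q) = 0 := uF_marker_off hN hc _ hv_u hv_u2
  obtain ⟨t₁, ht₁, hveq⟩ := off_zero_char _ hov
  have hvmod : ((k-1)*(3*N+2) + q < (k-1)*(3*N+2) + (3*c+2) ∧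
        ((k-1)*(3*N+2) + q) % ((k-1)*(3*N+2) + (3*c+2)) = (k-1)*(3*N+2) + q)
      ∨ ((k-1)*(3*N+2) + (3*c+2) ≤ (k-1)*(3*N+2) + q ∧
        ((k-1)*(3*N+2) + q) % ((k-1)*(3*N+2) + (3*c+2)) = (k-1)*(3*N+2) + q - ((k-1)*(3*N+2) + (3*c+2))) := by
    rcases lt_or_ge ((k-1)*(3*N+2) + q) ((k-1)*(3*N+2) + (3*c+2)) with h | h
    · exact Or.inl ⟨h, Nat.mod_eq_of_lt h⟩
    · refine Or.inr ⟨h, ?_⟩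
      rw [Nat.mod_eq_sub_mod h]
      exact Nat.mod_eq_of_lt (by omega)
  rcases hvmod with ⟨hcase, hcase'⟩ | ⟨hcase, hcase'⟩ <;> rw [hcase'] at hveq <;>
    interval_cases k <;> interval_cases t₀ <;> interval_cases t₁ <;> omega

end ConstructionProps

section Final

variable {β : ℝ}

lemma good_exists (N : ℕ) (hN : 1 ≤ N) (p : ℕ) (hp : 9*N+9 ≤ p) :
    ∃ k c, 1 ≤ k ∧ k ≤ 3 ∧ N < c ∧ p = (k-1)*(3*N+2) + (3*c+2) := by
  rcases (by omega : p % 3 = 0 ∨ p % 3 = 1 ∨ p % 3 = 2) with h | h | h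
  · exact ⟨3, p/3 - 2*N - 2, by omega, by omega, by omega, by omega⟩
  · exact ⟨2, (p-4)/3 - N, by omega, by omega, by omega, by omega⟩
  · exact ⟨1, (p-2)/3, by omega, by omega, by omega, by omega⟩

lemma S_ge_final (hβ1 : β ^ 3 = β ^ 2 + β + 1) (hβ2 : 1 < β) (hβ3 : β < 2)
    (N : ℕ) (hN : 1 ≤ N) (p : ℕ) (hp : 9*N+9 ≤ p) :
    (β+1)/β^3 - 1/β^(3*N) ≤ S β p := by
  obtain ⟨k, c, hk1, hk3, hc, hpeq⟩ := good_exists N hN p hp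
  apply S_ge hβ1 hβ2 hβ3 (uF N k c) uF_le_one p N (by omega) hN
  · intro i; rw [hpeq]; exact uF_per i
  · exact uF_h00 hN hc
  · exact uF_h111 hN hc
  · refine ⟨0, ?_⟩
    have hm0 : offF N k c 0 = 0 := by
      have := off_zero_start (N := N) (k := k) (c := c) hN 0 (by omega)
      rw [show 0*(3*N+2) = 0 by omega] at this
      exact this
    have := marker_of_off hN hc 0 hm0
    rw [show (0:ℕ)+2 = 2 by omega] at this
    exact this
  · exact uF_hrun hN hc
  · intro q hq0 hqlt heq
    exact uF_hprim hN hc hk1 hk3 q hq0 (by omega) heq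

end Final

theorem stmt19 (β : ℝ) (hβ1 : β ^ 3 = β ^ 2 + β + 1) (hβ2 : 1 < β) (hβ3 : β < 2) :
    Filter.Tendsto (fun p : ℕ => S β p) Filter.atTop (nhds ((β ^ 2 + 1) / (β ^ 4 - β))) := by
  have hb := beta_pos hβ2
  have hβ1' : β^3 - β^2 - β - 1 = 0 := by linarith
  have hL : (β ^ 2 + 1) / (β ^ 4 - β) = (β+1)/β^3 := by
    rw [div_eq_div_iff (by nlinarith) (by positivity)]
    linear_combination (-β) * hβ1'
  rw [hL, Metric.tendsto_atTop]
  intro ε hε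
  obtain ⟨n, hn⟩ := exists_pow_lt_of_lt_one hε
    (show 1/β < 1 by rw [div_lt_one hb]; linarith)
  set N := n+1 with hN_def
  have hNb : 1/β^(3*N) < ε := by
    have h1 : (1/β)^(3*N) ≤ (1/β)^n :=
      pow_le_pow_of_le_one (by positivity) (by rw [div_le_one hb]; linarith) (by omega)
    have h2 : (1/β)^(3*N) = 1/β^(3*N) := by rw [div_pow, one_pow]
    rw [← h2]
    linarith
  refine ⟨9*N+9, fun p hp => ?_⟩
  have h1 := S_le hβ1 hβ2 hβ3 p (by omega)
  have h2 := S_ge_final hβ1 hβ2 hβ3 N (by omega) p hp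
  rw [Real.dist_eq, abs_lt]
  constructor <;> linarith
end
end
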